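/- arXiv:1811.07509 — 7 statements merged into one kernel-verified Lean document; each statement's English description precedes it below -/
import Mathlib

section
/- Let (Ω, 𝓕, μ) be a probability space and n a positive integer. Let K be a set of (μ-a.e. equivalence classes of) measurable functions Ω → ℝ^n such that: (i) K is an ℝ-vector subspace of L^0(Ω; ℝ^n); (ii) K is closed under convergence in measure, i.e. if (f_k) ⊆ K converges in measure to f then f ∈ K; (iii) for every f ∈ K and every bounded measurable b : Ω → [0, ∞), the pointwise product b·f belongs to K. Then there exist measurable functions g^1, …, g^n : Ω → ℝ^n such that K = { f ∈ L^0(Ω; ℝ^n) : f(ω) ∈ span{g^1(ω), …, g^n(ω)} for μ-a.e. ω }. -/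
/-!
Among the families `v : ℕ → Ω → E` with values in `K`, choose one, `h`, maximising
`∫ dim span {v j ω} dμ`; the supremum is attained by interleaving a maximising sequence of
families. Adjoining some `f ∈ K` to `h` cannot increase this integral, so the dimension does not
grow almost everywhere, i.e. `f ω ∈ span {h j ω}` for a.e. `ω`.

Conversely, Gram–Schmidt applied pointwise to `h` stays in `K`, because projecting onto a line
only multiplies by a measurable scalar, and the partial sums of the projections onto the
Gram–Schmidt vectors are eventually the orthogonal projection `P ω` onto `span {h j ω}`. Hence
`ω ↦ P ω (f ω)` lies in `K` for every measurable `f`, which gives `f ∈ K` as soon as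
`f ω ∈ span {h j ω}` a.e. The generators are `P ω` applied to a basis of `E`; a general
finite-dimensional `E` is first identified with a Euclidean space.
-/

open MeasureTheory Filter

open scoped ENNReal Topology RealInnerProductSpace

open Set Submodule Module InnerProductSpace

section LinearAlgebra

theorem eventually_range_subset_span {R M : Type*} [Semiring R] [AddCommMonoid M] [Module R M]
    [IsNoetherian R M] (w : ℕ → M) : ∀ᶠ N in atTop, range w ⊆ span R (w '' Iio N) := by
  obtain ⟨N₀, hN₀⟩ := monotone_stabilizes_iff_noetherian.mpr ‹_›
    ⟨fun N => span R (w '' Iio N), fun _ _ h => span_mono (image_mono (Iio_subset_Iio h))⟩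
  have hstable : ∀ N, N₀ ≤ N → span R (w '' Iio N₀) = span R (w '' Iio N) := hN₀
  filter_upwards [eventually_ge_atTop N₀] with N hN
  rintro _ ⟨j, rfl⟩
  rw [← hstable N hN, hstable (max N₀ (j + 1)) (le_max_left _ _)]
  exact subset_span ⟨j, (Nat.lt_succ_self j).trans_le (le_max_right _ _), rfl⟩

theorem span_range_comp_basis {R M N ι : Type*} [Semiring R] [AddCommMonoid M] [Module R M]
    [AddCommMonoid N] [Module R N] (b : Basis ι R M) (φ : M →ₗ[R] N) :
    span R (range fun i => φ (b i)) = φ.range := by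
  rw [show (range fun i => φ (b i)) = φ '' range b from range_comp φ b, span_image, b.span_eq,
    Submodule.map_top]

variable {E : Type*} [NormedAddCommGroup E] [InnerProductSpace ℝ E]

theorem inner_sub_sum_starProjection_gramSchmidt (w : ℕ → E) (x : E) {N k : ℕ} (hk : k < N) :
    ⟪x - ∑ j ∈ Finset.range N, (ℝ ∙ gramSchmidt ℝ w j).starProjection x,
      gramSchmidt ℝ w k⟫ = 0 := by
  rw [inner_sub_left, sum_inner, Finset.sum_eq_single k, ← inner_sub_left]
  · exact inner_left_of_mem_orthogonal (mem_span_singleton_self _)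
      (sub_starProjection_mem_orthogonal x)
  · intro j _ hjk
    rw [starProjection_singleton, inner_smul_left, gramSchmidt_orthogonal ℝ w hjk, mul_zero]
  · exact fun h => absurd (Finset.mem_range.2 hk) h

theorem eventually_sum_starProjection_gramSchmidt_eq [FiniteDimensional ℝ E] (w : ℕ → E)
    (x : E) : ∀ᶠ N in atTop, ∑ j ∈ Finset.range N, (ℝ ∙ gramSchmidt ℝ w j).starProjection x =
      (span ℝ (range w)).starProjection x := by
  filter_upwards [eventually_range_subset_span (R := ℝ) (gramSchmidt ℝ w)] with N hN
  rw [← span_gramSchmidt ℝ w]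
  refine (eq_starProjection_of_mem_of_inner_eq_zero (sum_mem fun j _ => ?_) fun y hy => ?_).symm
  · exact span_mono (singleton_subset_iff.2 (mem_range_self j)) (starProjection_apply_mem _ x)
  · have horth : span ℝ (range (gramSchmidt ℝ w)) ≤
        (ℝ ∙ (x - ∑ j ∈ Finset.range N, (ℝ ∙ gramSchmidt ℝ w j).starProjection x))ᗮ := by
      refine (span_le.2 hN).trans (span_le.2 ?_)
      rintro _ ⟨k, hk, rfl⟩
      exact mem_orthogonal_singleton_iff_inner_right.2
        (inner_sub_sum_starProjection_gramSchmidt w x hk)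
    exact mem_orthogonal_singleton_iff_inner_right.1 (horth hy)

theorem finrank_eq_sum_inner_starProjection [FiniteDimensional ℝ E] (U : Submodule ℝ E)
    {ι : Type*} [Fintype ι] (b : OrthonormalBasis ι ℝ E) :
    (finrank ℝ U : ℝ) = ∑ i, ⟪b i, U.starProjection (b i)⟫ := by
  have hproj : LinearMap.IsProj U (U.starProjection : E →ₗ[ℝ] E) :=
    ⟨starProjection_apply_mem U, fun _ hx => starProjection_eq_self_iff.2 hx⟩
  rw [← hproj.trace, LinearMap.trace_eq_sum_inner _ b]
  rfl

end LinearAlgebra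

def spanAt {Ω E : Type*} [AddCommMonoid E] [Module ℝ E] (v : ℕ → Ω → E) (ω : Ω) :
    Submodule ℝ E :=
  span ℝ (range fun j => v j ω)

def interleave {α : Type*} (V : ℕ → ℕ → α) : ℕ → α := fun j => V j.unpair.1 j.unpair.2

theorem spanAt_le_spanAt_interleave {Ω E : Type*} [AddCommMonoid E] [Module ℝ E]
    (V : ℕ → ℕ → Ω → E) (k : ℕ) (ω : Ω) : spanAt (V k) ω ≤ spanAt (interleave V) ω :=
  span_mono (range_subset_iff.2 fun j => ⟨Nat.pair k j, by simp [interleave]⟩)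

/-- Closedness is asked for a.e. limits only; for a finite measure this follows from closedness
under convergence in measure. -/
structure IsClosedL0Submodule {Ω E : Type*} [MeasurableSpace Ω] [NormedAddCommGroup E]
    [NormedSpace ℝ E] [MeasurableSpace E] (μ : Measure Ω) (K : Set (Ω → E)) : Prop where
  measurable : ∀ f ∈ K, Measurable f
  zero_mem : (fun _ => 0) ∈ K
  add_mem : ∀ f ∈ K, ∀ g ∈ K, (fun ω => f ω + g ω) ∈ K
  smul_mem : ∀ c : ℝ, ∀ f ∈ K, (fun ω => c • f ω) ∈ K
  bounded_smul_mem : ∀ f ∈ K, ∀ b : Ω → ℝ, Measurable b → (∀ ω, 0 ≤ b ω) →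
    (∃ C : ℝ, ∀ ω, b ω ≤ C) → (fun ω => b ω • f ω) ∈ K
  mem_of_tendsto_ae : ∀ f : ℕ → Ω → E, (∀ k, f k ∈ K) → ∀ g : Ω → E, Measurable g →
    (∀ᵐ ω ∂μ, Tendsto (fun k => f k ω) atTop (𝓝 (g ω))) → g ∈ K

namespace IsClosedL0Submodule

variable {Ω E : Type*} [MeasurableSpace Ω] {μ : Measure Ω}

section Normed

variable [NormedAddCommGroup E] [NormedSpace ℝ E] [MeasurableSpace E] {K : Set (Ω → E)}

theorem sub_mem (hK : IsClosedL0Submodule μ K) {f g : Ω → E} (hf : f ∈ K) (hg : g ∈ K) :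
    (fun ω => f ω - g ω) ∈ K := by
  simpa [sub_eq_add_neg] using hK.add_mem f hf _ (hK.smul_mem (-1) g hg)

theorem sum_mem (hK : IsClosedL0Submodule μ K) {ι : Type*} (s : Finset ι) {f : ι → Ω → E}
    (hf : ∀ i ∈ s, f i ∈ K) : (fun ω => ∑ i ∈ s, f i ω) ∈ K := by
  classical
  induction s using Finset.induction with
  | empty => simpa using hK.zero_mem
  | insert i s hi ih =>
    simp_rw [Finset.sum_insert hi]
    exact hK.add_mem _ (hf i (s.mem_insert_self i)) _
      (ih fun j hj => hf j (Finset.mem_insert_of_mem hj))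

theorem mem_of_ae_eq (hK : IsClosedL0Submodule μ K) {f g : Ω → E} (hf : f ∈ K)
    (hfg : f =ᵐ[μ] g) (hg : Measurable g) : g ∈ K :=
  hK.mem_of_tendsto_ae (fun _ => f) (fun _ => hf) g hg
    (hfg.mono fun _ hω => hω ▸ tendsto_const_nhds)

theorem smul_mem_of_nonneg [MeasurableSMul₂ ℝ E] (hK : IsClosedL0Submodule μ K) {f : Ω → E}
    (hf : f ∈ K) {c : Ω → ℝ} (hc : Measurable c) (hc0 : ∀ ω, 0 ≤ c ω) :
    (fun ω => c ω • f ω) ∈ K := by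
  refine hK.mem_of_tendsto_ae (fun m ω => min (c ω) m • f ω)
    (fun m => hK.bounded_smul_mem f hf _ (hc.min measurable_const)
      (fun ω => le_min (hc0 ω) m.cast_nonneg) ⟨m, fun ω => min_le_right _ _⟩)
    _ (hc.smul (hK.measurable f hf)) (ae_of_all _ fun ω => tendsto_const_nhds.congr' ?_)
  filter_upwards [eventually_ge_atTop ⌈c ω⌉₊] with m hm
  rw [min_eq_left ((Nat.le_ceil _).trans (Nat.cast_le.2 hm))]

theorem smul_mem_of_measurable [MeasurableSMul₂ ℝ E] (hK : IsClosedL0Submodule μ K)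
    {f : Ω → E} (hf : f ∈ K) {c : Ω → ℝ} (hc : Measurable c) : (fun ω => c ω • f ω) ∈ K := by
  have hsplit := hK.sub_mem
    (hK.smul_mem_of_nonneg hf (hc.max measurable_const) fun ω => le_max_right (c ω) 0)
    (hK.smul_mem_of_nonneg hf (hc.neg.max measurable_const) fun ω => le_max_right (-c ω) 0)
  simpa only [Pi.neg_apply, ← sub_smul, max_zero_sub_max_neg_zero_eq_self] using hsplit

theorem exists_forall_lintegral_finrank_spanAt_le [FiniteDimensional ℝ E]
    (hK : IsClosedL0Submodule μ K) :
    ∃ h : ℕ → Ω → E, (∀ j, h j ∈ K) ∧ ∀ v : ℕ → Ω → E, (∀ j, v j ∈ K) →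
      ∫⁻ ω, (finrank ℝ (spanAt v ω) : ℝ≥0∞) ∂μ ≤ ∫⁻ ω, (finrank ℝ (spanAt h ω) : ℝ≥0∞) ∂μ := by
  set S : Set ℝ≥0∞ := {r | ∃ v : ℕ → Ω → E, (∀ j, v j ∈ K) ∧
    ∫⁻ ω, (finrank ℝ (spanAt v ω) : ℝ≥0∞) ∂μ = r}
  obtain ⟨r, -, hr, hrS⟩ := exists_seq_tendsto_sSup (S := S)
    ⟨_, fun _ _ => 0, fun _ => hK.zero_mem, rfl⟩ (OrderTop.bddAbove S)
  choose V hVK hV using hrS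
  refine ⟨interleave V, fun j => hVK _ _,
    fun v hv => (le_sSup (show _ ∈ S from ⟨v, hv, rfl⟩)).trans ?_⟩
  refine le_of_tendsto' hr fun k => hV k ▸ lintegral_mono fun ω => ?_
  exact Nat.cast_le.2 (finrank_mono (spanAt_le_spanAt_interleave V k ω))

end Normed

section Inner

variable [NormedAddCommGroup E] [InnerProductSpace ℝ E] [FiniteDimensional ℝ E]
  [MeasurableSpace E] [BorelSpace E] {K : Set (Ω → E)}

theorem starProjection_singleton_mem (hK : IsClosedL0Submodule μ K) {u f : Ω → E}
    (hu : u ∈ K) (hf : Measurable f) : (fun ω => (ℝ ∙ u ω).starProjection (f ω)) ∈ K := by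
  simp_rw [starProjection_singleton, RCLike.ofReal_real_eq_id, id]
  have hum := hK.measurable u hu
  exact hK.smul_mem_of_measurable hu (by fun_prop)

theorem gramSchmidt_mem (hK : IsClosedL0Submodule μ K) {v : ℕ → Ω → E} (hv : ∀ j, v j ∈ K)
    (j : ℕ) : (fun ω => gramSchmidt ℝ (fun j => v j ω) j) ∈ K := by
  induction j using Nat.strong_induction_on with
  | _ j ih =>
    simp_rw [gramSchmidt_def ℝ _ j]
    exact hK.sub_mem (hv j) (hK.sum_mem _ fun i hi =>
      hK.starProjection_singleton_mem (ih i (Finset.mem_Iio.1 hi)) (hK.measurable _ (hv j)))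

theorem starProjection_spanAt_mem (hK : IsClosedL0Submodule μ K) {v : ℕ → Ω → E}
    (hv : ∀ j, v j ∈ K) {f : Ω → E} (hf : Measurable f) :
    (fun ω => (spanAt v ω).starProjection (f ω)) ∈ K := by
  set Q : ℕ → Ω → E := fun N ω =>
    ∑ j ∈ Finset.range N, (ℝ ∙ gramSchmidt ℝ (fun j => v j ω) j).starProjection (f ω)
  have hQ : ∀ N, Q N ∈ K := fun N =>
    hK.sum_mem _ fun j _ => hK.starProjection_singleton_mem (hK.gramSchmidt_mem hv j) hf
  have hlim : ∀ ω, Tendsto (fun N => Q N ω) atTop (𝓝 ((spanAt v ω).starProjection (f ω))) :=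
    fun ω => tendsto_const_nhds.congr'
      ((eventually_sum_starProjection_gramSchmidt_eq _ (f ω)).mono fun _ h => h.symm)
  exact hK.mem_of_tendsto_ae Q hQ _
    (measurable_of_tendsto_metrizable (fun N => hK.measurable _ (hQ N))
      (tendsto_pi_nhds.2 hlim))
    (ae_of_all _ hlim)

theorem measurable_finrank_spanAt (hK : IsClosedL0Submodule μ K) {v : ℕ → Ω → E}
    (hv : ∀ j, v j ∈ K) : Measurable fun ω => (finrank ℝ (spanAt v ω) : ℝ≥0∞) := by
  simp_rw [← ENNReal.ofReal_natCast,
    finrank_eq_sum_inner_starProjection _ (stdOrthonormalBasis ℝ E)]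
  exact ENNReal.measurable_ofReal.comp (Finset.measurable_sum _ fun i _ =>
    measurable_const.inner (hK.measurable _ (hK.starProjection_spanAt_mem hv measurable_const)))

theorem ae_mem_spanAt_of_forall_lintegral_le [IsFiniteMeasure μ] (hK : IsClosedL0Submodule μ K)
    {h : ℕ → Ω → E} (hh : ∀ j, h j ∈ K) (hmax : ∀ v : ℕ → Ω → E, (∀ j, v j ∈ K) →
      ∫⁻ ω, (finrank ℝ (spanAt v ω) : ℝ≥0∞) ∂μ ≤ ∫⁻ ω, (finrank ℝ (spanAt h ω) : ℝ≥0∞) ∂μ)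
    {f : Ω → E} (hf : f ∈ K) : ∀ᵐ ω ∂μ, f ω ∈ spanAt h ω := by
  set V : ℕ → ℕ → Ω → E := fun k => if k = 0 then fun _ => f else h
  have hV : ∀ j, interleave V j ∈ K := fun j => by
    by_cases hj : j.unpair.1 = 0 <;> simp [interleave, V, hj, hf, hh]
  have hle : ∀ ω, spanAt h ω ≤ spanAt (interleave V) ω := spanAt_le_spanAt_interleave V 1
  have hfinite : ∫⁻ ω, (finrank ℝ (spanAt h ω) : ℝ≥0∞) ∂μ ≠ ∞ := by
    refine ne_top_of_le_ne_top ?_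
      (lintegral_mono fun ω => Nat.cast_le.2 (finrank_le (spanAt h ω)))
    simp [lintegral_const, ENNReal.mul_eq_top]
  have hrank := ae_eq_of_ae_le_of_lintegral_le
    (ae_of_all _ fun ω => Nat.cast_le.2 (finrank_mono (hle ω))) hfinite
    (hK.measurable_finrank_spanAt hV).aemeasurable (hmax _ hV)
  filter_upwards [hrank] with ω hω
  rw [eq_of_le_of_finrank_eq (hle ω) (by exact_mod_cast hω)]
  exact spanAt_le_spanAt_interleave V 0 ω (subset_span ⟨0, rfl⟩)

theorem exists_measurable_eq_setOf_ae_mem_span_of_inner [IsFiniteMeasure μ]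
    (hK : IsClosedL0Submodule μ K) {ι : Type*} (b : Basis ι ℝ E) :
    ∃ g : ι → Ω → E, (∀ i, Measurable (g i)) ∧
      K = {f | Measurable f ∧ ∀ᵐ ω ∂μ, f ω ∈ span ℝ (range fun i => g i ω)} := by
  obtain ⟨h, hh, hmax⟩ := hK.exists_forall_lintegral_finrank_spanAt_le
  refine ⟨fun i ω => (spanAt h ω).starProjection (b i),
    fun i => hK.measurable _ (hK.starProjection_spanAt_mem hh measurable_const), ?_⟩
  have hspan : ∀ ω, span ℝ (range fun i => (spanAt h ω).starProjection (b i)) = spanAt h ω :=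
    fun ω => (span_range_comp_basis b _).trans (range_starProjection _)
  simp_rw [hspan]
  ext f
  refine ⟨fun hf => ⟨hK.measurable f hf, hK.ae_mem_spanAt_of_forall_lintegral_le hh hmax hf⟩,
    fun ⟨hfm, hf⟩ => hK.mem_of_ae_eq (hK.starProjection_spanAt_mem hh hfm) ?_ hfm⟩
  exact hf.mono fun ω hω => starProjection_eq_self_iff.2 hω

end Inner

variable [NormedAddCommGroup E] [NormedSpace ℝ E] [MeasurableSpace E] [BorelSpace E]
  {K : Set (Ω → E)}

theorem map_continuousLinearEquiv {F : Type*} [NormedAddCommGroup F] [NormedSpace ℝ F]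
    [MeasurableSpace F] [BorelSpace F] (hK : IsClosedL0Submodule μ K) (T : E ≃L[ℝ] F) :
    IsClosedL0Submodule μ {f : Ω → F | (fun ω => T.symm (f ω)) ∈ K} where
  measurable f hf := by
    simpa [Function.comp_def] using T.continuous.measurable.comp (hK.measurable _ hf)
  zero_mem := by simpa using hK.zero_mem
  add_mem f hf g hg := by simpa using hK.add_mem _ hf _ hg
  smul_mem c f hf := by simpa using hK.smul_mem c _ hf
  bounded_smul_mem f hf b hb hb0 hbC := by simpa using hK.bounded_smul_mem _ hf b hb hb0 hbC
  mem_of_tendsto_ae f hf g hg hfg := hK.mem_of_tendsto_ae _ hf _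
    (T.symm.continuous.measurable.comp hg)
    (hfg.mono fun _ h => (T.symm.continuous.tendsto _).comp h)

theorem exists_measurable_eq_setOf_ae_mem_span [FiniteDimensional ℝ E] [IsFiniteMeasure μ]
    (hK : IsClosedL0Submodule μ K) {ι : Type*} (b : Basis ι ℝ E) :
    ∃ g : ι → Ω → E, (∀ i, Measurable (g i)) ∧
      K = {f | Measurable f ∧ ∀ᵐ ω ∂μ, f ω ∈ span ℝ (range fun i => g i ω)} := by
  let T : E ≃L[ℝ] EuclideanSpace ℝ (Fin (finrank ℝ E)) :=
    .ofFinrankEq finrank_euclideanSpace_fin.symm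
  obtain ⟨g, hg, hKg⟩ :=
    (hK.map_continuousLinearEquiv T).exists_measurable_eq_setOf_ae_mem_span_of_inner
      (b.map T.toLinearEquiv)
  refine ⟨fun i ω => T.symm (g i ω), fun i => T.symm.continuous.measurable.comp (hg i), ?_⟩
  ext f
  have hf : f ∈ K ↔ (fun ω => T (f ω)) ∈ {f : Ω → _ | (fun ω => T.symm (f ω)) ∈ K} := by simp
  rw [hf, hKg]
  refine and_congr T.toHomeomorph.toMeasurableEquiv.measurableEmbedding.measurable_comp_iff ?_
  refine eventually_congr (ae_of_all _ fun ω => ?_)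
  rw [show (range fun i => T.symm (g i ω)) = T.symm.toLinearEquiv '' range fun i => g i ω from
    range_comp _ _, span_image_linearEquiv, mem_map_equiv]
  rfl

end IsClosedL0Submodule

theorem stmt_1_general {Ω : Type*} [MeasurableSpace Ω] (μ : Measure Ω) [IsProbabilityMeasure μ]
    (n : ℕ) (K : Set (Ω → (Fin n → ℝ)))
    (hKmeas : ∀ f ∈ K, Measurable f)
    -- (i) K is a vector subspace of L⁰(Ω; ℝⁿ)
    (hzero : (fun _ : Ω => (0 : Fin n → ℝ)) ∈ K)
    (hadd : ∀ f ∈ K, ∀ g ∈ K, (fun ω => f ω + g ω) ∈ K)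
    (hsmul : ∀ c : ℝ, ∀ f ∈ K, (fun ω => c • f ω) ∈ K)
    -- (ii) K is closed under convergence in measure
    (hclosed : ∀ f : ℕ → Ω → (Fin n → ℝ), (∀ k, f k ∈ K) →
      ∀ g : Ω → (Fin n → ℝ), Measurable g → TendstoInMeasure μ f atTop g → g ∈ K)
    -- (iii) K is stable under multiplication by bounded nonnegative measurable functions
    (hmul : ∀ f ∈ K, ∀ b : Ω → ℝ, Measurable b → (∀ ω, 0 ≤ b ω) →
      (∃ C : ℝ, ∀ ω, b ω ≤ C) → (fun ω => b ω • f ω) ∈ K) :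
    ∃ g : Fin n → Ω → (Fin n → ℝ), (∀ i, Measurable (g i)) ∧
      K = { f : Ω → (Fin n → ℝ) | Measurable f ∧
        ∀ᵐ ω ∂μ, f ω ∈ Submodule.span ℝ (Set.range fun i => g i ω) } := by
  have hK : IsClosedL0Submodule μ K :=
    { measurable := hKmeas
      zero_mem := hzero
      add_mem := hadd
      smul_mem := hsmul
      bounded_smul_mem := hmul
      mem_of_tendsto_ae := fun f hf g hg hfg => hclosed f hf g hg
        (tendstoInMeasure_of_tendsto_ae (fun k => (hKmeas _ (hf k)).aestronglyMeasurable) hfg) }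
  exact hK.exists_measurable_eq_setOf_ae_mem_span (Pi.basisFun ℝ (Fin n))

/-- Structure theorem for subspaces of `L⁰(Ω; ℝⁿ)` (sets of a.e. equivalence classes of
measurable functions, modeled as sets of measurable functions closed under a.e. equality)
that are vector subspaces, closed under convergence in measure, and stable under
multiplication by bounded nonnegative measurable scalar functions: such a set is the set
of measurable selections of a measurably parametrized family of subspaces spanned by
`n` measurable vector fields. -/
theorem stmt_1 {Ω : Type*} [MeasurableSpace Ω] (μ : Measure Ω) [IsProbabilityMeasure μ]
    (n : ℕ) (hn : 0 < n) (K : Set (Ω → (Fin n → ℝ)))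
    (hKmeas : ∀ f ∈ K, Measurable f)
    (hKae : ∀ f ∈ K, ∀ g : Ω → (Fin n → ℝ), Measurable g → f =ᵐ[μ] g → g ∈ K)
    -- (i) K is a vector subspace of L⁰(Ω; ℝⁿ)
    (hzero : (fun _ : Ω => (0 : Fin n → ℝ)) ∈ K)
    (hadd : ∀ f ∈ K, ∀ g ∈ K, (fun ω => f ω + g ω) ∈ K)
    (hsmul : ∀ c : ℝ, ∀ f ∈ K, (fun ω => c • f ω) ∈ K)
    -- (ii) K is closed under convergence in measure
    (hclosed : ∀ f : ℕ → Ω → (Fin n → ℝ), (∀ k, f k ∈ K) →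
      ∀ g : Ω → (Fin n → ℝ), Measurable g → TendstoInMeasure μ f atTop g → g ∈ K)
    -- (iii) K is stable under multiplication by bounded nonnegative measurable functions
    (hmul : ∀ f ∈ K, ∀ b : Ω → ℝ, Measurable b → (∀ ω, 0 ≤ b ω) →
      (∃ C : ℝ, ∀ ω, b ω ≤ C) → (fun ω => b ω • f ω) ∈ K) :
    ∃ g : Fin n → Ω → (Fin n → ℝ), (∀ i, Measurable (g i)) ∧
      K = { f : Ω → (Fin n → ℝ) | Measurable f ∧
        ∀ᵐ ω ∂μ, f ω ∈ Submodule.span ℝ (Set.range fun i => g i ω) } :=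
  stmt_1_general μ n K hKmeas hzero hadd hsmul hclosed hmul
end

section
/- Let (Ω, 𝓕, μ) be a probability space, let α : Ω → Matrix (Fin r) (Fin n) ℝ be measurable, and let S = { ω ↦ β(ω) ⬝ α(ω) : β : Ω → ℝ^r bounded measurable } ⊆ L^0(Ω; ℝ^n). Then the closure of S under convergence in measure equals { γ ∈ L^0(Ω; ℝ^n) : γ(ω) belongs to the row span of α(ω) for μ-a.e. ω }. -/
/-!
A limit in measure is an a.e. limit along a subsequence, and row spaces are closed, so every
limit lies a.e. in the row span. Conversely, if `γ ω = c ω ᵥ* α ω`, the Tikhonov-regularised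
solutions `β_ε = (α αᵀ + ε I)⁻¹ α γ` depend continuously on `(α, γ)`, hence measurably on `ω`,
without any measurable choice of `c`; the normal equations give
`‖β_ε ᵥ* α - γ‖² ≤ ε ‖c‖²` and `‖β_ε‖ ≤ ‖c‖`. Replacing `β_{1/(k+1)}` by `0` where
`‖β_{1/(k+1)}‖² > k` makes the coefficients bounded, and at each `ω` this cutoff is inactive for
`k ≥ ‖c ω‖²`; so the products converge a.e., hence in measure.
-/
open MeasureTheory Filter Matrix Topology

lemma MeasureTheory.TendstoInMeasure.ae_mem {Ω ι E : Type*} [MeasurableSpace Ω]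
    {μ : Measure Ω} [PseudoEMetricSpace E] {u : Filter ι} [u.NeBot] [u.IsCountablyGenerated]
    {f : ι → Ω → E} {g : Ω → E} {S : Ω → Set E} (hfg : TendstoInMeasure μ f u g)
    (hS : ∀ ω, IsClosed (S ω)) (hfS : ∀ i, ∀ᵐ ω ∂μ, f i ω ∈ S ω) : ∀ᵐ ω ∂μ, g ω ∈ S ω := by
  obtain ⟨ns, -, hns⟩ := hfg.exists_seq_tendsto_ae'
  filter_upwards [hns, ae_all_iff.2 fun k => hfS (ns k)] with ω hlim hmem
  exact (hS ω).mem_of_tendsto hlim (Eventually.of_forall hmem)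

namespace Matrix

variable {m n : Type*} [Fintype m]

lemma dotProduct_self_nonneg (v : m → ℝ) : 0 ≤ v ⬝ᵥ v :=
  Finset.sum_nonneg fun _ _ => mul_self_nonneg _

lemma abs_apply_le_sqrt_dotProduct_self (v : m → ℝ) (i : m) : |v i| ≤ √(v ⬝ᵥ v) :=
  Real.abs_le_sqrt <| by
    rw [sq]
    exact Finset.single_le_sum (f := fun j => v j * v j) (fun j _ => mul_self_nonneg _)
      (Finset.mem_univ i)

lemma mem_span_range_row_iff_exists_vecMul {R : Type*} [CommSemiring R] (A : Matrix m n R)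
    (v : n → R) : v ∈ Submodule.span R (Set.range A.row) ↔ ∃ c, c ᵥ* A = v := by
  rw [← range_vecMulLinear]
  rfl

variable [Fintype n] [DecidableEq m]

lemma isUnit_mul_transpose_add_smul_one (A : Matrix m n ℝ) {ε : ℝ} (hε : 0 < ε) :
    IsUnit (A * Aᵀ + ε • 1) := by
  have hpsd : (A * Aᵀ).PosSemidef :=
    conjTranspose_eq_transpose_of_trivial A ▸ posSemidef_self_mul_conjTranspose A
  exact (PosDef.posSemidef_add hpsd (PosDef.one.smul hε)).isUnit

/-- The minimiser of `‖β ᵥ* A - γ‖² + ε ‖β‖²`. -/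
noncomputable def tikhonov (A : Matrix m n ℝ) (ε : ℝ) (γ : n → ℝ) : m → ℝ :=
  (A * Aᵀ + ε • 1)⁻¹ *ᵥ (A *ᵥ γ)

lemma mul_transpose_add_smul_one_mulVec_tikhonov (A : Matrix m n ℝ) {ε : ℝ} (hε : 0 < ε)
    (γ : n → ℝ) : (A * Aᵀ + ε • 1) *ᵥ tikhonov A ε γ = A *ᵥ γ := by
  rw [tikhonov, mulVec_mulVec, mul_nonsing_inv _ ((isUnit_iff_isUnit_det _).mp
    (isUnit_mul_transpose_add_smul_one A hε)), one_mulVec]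

lemma continuous_tikhonov {ε : ℝ} (hε : 0 < ε) :
    Continuous fun p : (m → n → ℝ) × (n → ℝ) => tikhonov (of p.1) ε p.2 := by
  set M : (m → n → ℝ) → Matrix m m ℝ := fun a => of a * (of a)ᵀ + ε • 1
  have hM : Continuous M := by fun_prop
  have hinv : Continuous fun a => (M a)⁻¹ := by
    refine continuous_iff_continuousAt.2 fun a =>
      (continuousAt_matrix_inv _ ?_).comp hM.continuousAt
    rw [Ring.inverse_eq_inv']
    exact continuousAt_inv₀
      ((isUnit_iff_isUnit_det _).mp (isUnit_mul_transpose_add_smul_one _ hε)).ne_zero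
  exact (hinv.comp continuous_fst).matrix_mulVec (continuous_fst.matrix_mulVec continuous_snd)

lemma mulVec_residual_tikhonov (A : Matrix m n ℝ) {ε : ℝ} (hε : 0 < ε) (γ : n → ℝ) :
    A *ᵥ (tikhonov A ε γ ᵥ* A - γ) = -(ε • tikhonov A ε γ) := by
  have h := mul_transpose_add_smul_one_mulVec_tikhonov A hε γ
  rw [add_mulVec, smul_mulVec, one_mulVec, ← mulVec_mulVec, mulVec_transpose] at h
  rw [mulVec_sub, ← h]
  abel

lemma tikhonov_estimate (A : Matrix m n ℝ) {ε : ℝ} (hε : 0 < ε) {γ : n → ℝ} {c : m → ℝ}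
    (hc : c ᵥ* A = γ) :
    (tikhonov A ε γ ᵥ* A - γ) ⬝ᵥ (tikhonov A ε γ ᵥ* A - γ)
      + ε * (tikhonov A ε γ ⬝ᵥ tikhonov A ε γ) ≤ ε * (c ⬝ᵥ c) := by
  set β := tikhonov A ε γ
  set e := β ᵥ* A - γ
  set δ := c - β
  have hδA : δ ᵥ* A = -e := by
    simp only [δ, e, sub_vecMul, hc, neg_sub]
  -- the normal equation `A e = -ε β` turns `δ ⬝ A e` into both `-‖e‖²` and `-ε δ ⬝ β`
  have hcross : e ⬝ᵥ e = ε * (δ ⬝ᵥ β) := by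
    have h := dotProduct_mulVec δ A e
    rw [mulVec_residual_tikhonov A hε γ, hδA, dotProduct_neg, dotProduct_smul, smul_eq_mul,
      neg_dotProduct] at h
    linarith
  have hexpand : c ⬝ᵥ c = β ⬝ᵥ β + 2 * (δ ⬝ᵥ β) + δ ⬝ᵥ δ := by
    rw [show c = β + δ by simp [δ], add_dotProduct, dotProduct_add, dotProduct_add,
      dotProduct_comm β δ]
    ring
  nlinarith [dotProduct_self_nonneg e, dotProduct_self_nonneg δ]

lemma dotProduct_self_tikhonov_le (A : Matrix m n ℝ) {ε : ℝ} (hε : 0 < ε) {γ : n → ℝ}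
    {c : m → ℝ} (hc : c ᵥ* A = γ) : tikhonov A ε γ ⬝ᵥ tikhonov A ε γ ≤ c ⬝ᵥ c := by
  have h := tikhonov_estimate A hε hc
  have := dotProduct_self_nonneg (tikhonov A ε γ ᵥ* A - γ)
  nlinarith

lemma dotProduct_self_residual_tikhonov_le (A : Matrix m n ℝ) {ε : ℝ} (hε : 0 < ε)
    {γ : n → ℝ} {c : m → ℝ} (hc : c ᵥ* A = γ) :
    (tikhonov A ε γ ᵥ* A - γ) ⬝ᵥ (tikhonov A ε γ ᵥ* A - γ) ≤ ε * (c ⬝ᵥ c) := by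
  have h := tikhonov_estimate A hε hc
  have := dotProduct_self_nonneg (tikhonov A ε γ)
  nlinarith

lemma tendsto_vecMul_tikhonov (A : Matrix m n ℝ) {γ : n → ℝ}
    (hγ : γ ∈ Submodule.span ℝ (Set.range A.row)) :
    Tendsto (fun ε => tikhonov A ε γ ᵥ* A) (𝓝[>] 0) (𝓝 γ) := by
  obtain ⟨c, hc⟩ := (mem_span_range_row_iff_exists_vecMul A γ).1 hγ
  have hbound : Tendsto (fun ε : ℝ => √(ε * (c ⬝ᵥ c))) (𝓝[>] 0) (𝓝 0) := by
    have hcont : Continuous fun ε : ℝ => √(ε * (c ⬝ᵥ c)) := by fun_prop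
    simpa using (hcont.tendsto 0).mono_left nhdsWithin_le_nhds
  refine tendsto_pi_nhds.2 fun j => tendsto_iff_norm_sub_tendsto_zero.2 ?_
  refine squeeze_zero' (Eventually.of_forall fun _ => norm_nonneg _) ?_ hbound
  filter_upwards [self_mem_nhdsWithin] with ε hε
  exact (abs_apply_le_sqrt_dotProduct_self _ j).trans
    (Real.sqrt_le_sqrt (dotProduct_self_residual_tikhonov_le A hε hc))

end Matrix

section Cutoff

variable {m : Type*} [Fintype m]

noncomputable def cutoff (R : ℝ) (v : m → ℝ) : m → ℝ :=
  if v ⬝ᵥ v ≤ R then v else 0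

lemma cutoff_of_dotProduct_self_le {R : ℝ} {v : m → ℝ} (h : v ⬝ᵥ v ≤ R) : cutoff R v = v :=
  if_pos h

lemma abs_cutoff_apply_le (R : ℝ) (v : m → ℝ) (i : m) : |cutoff R v i| ≤ √R := by
  unfold cutoff
  split_ifs with h
  · exact (abs_apply_le_sqrt_dotProduct_self v i).trans (Real.sqrt_le_sqrt h)
  · simp

lemma Measurable.cutoff {Ω : Type*} [MeasurableSpace Ω] {f : Ω → m → ℝ} (hf : Measurable f)
    (R : ℝ) : Measurable fun ω => cutoff R (f ω) :=
  Measurable.ite (measurableSet_le (by fun_prop) measurable_const) hf measurable_const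

end Cutoff

lemma tendsto_vecMul_cutoff_tikhonov {m n : Type*} [Fintype m] [Fintype n] [DecidableEq m]
    (A : Matrix m n ℝ) {γ : n → ℝ} (hγ : γ ∈ Submodule.span ℝ (Set.range A.row)) :
    Tendsto (fun k : ℕ => cutoff k (tikhonov A (1 / ((k : ℝ) + 1)) γ) ᵥ* A) atTop (𝓝 γ) := by
  obtain ⟨c, hc⟩ := (mem_span_range_row_iff_exists_vecMul A γ).1 hγ
  have hε : Tendsto (fun k : ℕ => 1 / ((k : ℝ) + 1)) atTop (𝓝[>] 0) :=
    tendsto_nhdsWithin_iff.2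
      ⟨tendsto_one_div_add_atTop_nhds_zero_nat,
        Eventually.of_forall fun k => Set.mem_Ioi.2 (by positivity)⟩
  refine ((tendsto_vecMul_tikhonov A hγ).comp hε).congr' ?_
  -- the cutoff is eventually inactive, because `‖tikhonov A ε γ‖² ≤ ‖c‖²` for every `ε > 0`
  filter_upwards [eventually_ge_atTop ⌈c ⬝ᵥ c⌉₊] with k hk
  rw [Function.comp_apply, cutoff_of_dotProduct_self_le]
  exact (dotProduct_self_tikhonov_le A (by positivity) hc).trans
    ((Nat.le_ceil _).trans (Nat.cast_le.2 hk))

section Measurability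

variable {Ω m n : Type*} [MeasurableSpace Ω] {α : Ω → Matrix m n ℝ}

lemma measurable_of_symm (hα : ∀ i j, Measurable fun ω => α ω i j) :
    Measurable fun ω => of.symm (α ω) :=
  measurable_pi_lambda _ fun i => measurable_pi_lambda _ fun j => hα i j

variable [Fintype m] [Fintype n]

lemma measurable_vecMul (hα : ∀ i j, Measurable fun ω => α ω i j) {β : Ω → m → ℝ}
    (hβ : Measurable β) : Measurable fun ω => β ω ᵥ* α ω := by
  have hcont : Continuous fun p : (m → ℝ) × (m → n → ℝ) => p.1 ᵥ* of p.2 :=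
    continuous_fst.matrix_vecMul continuous_snd
  exact hcont.measurable.comp (hβ.prodMk (measurable_of_symm hα))

lemma measurable_tikhonov [DecidableEq m] (hα : ∀ i j, Measurable fun ω => α ω i j)
    {γ : Ω → n → ℝ} (hγ : Measurable γ) {ε : ℝ} (hε : 0 < ε) :
    Measurable fun ω => tikhonov (α ω) ε (γ ω) := by
  have h := (continuous_tikhonov hε).measurable.comp ((measurable_of_symm hα).prodMk hγ)
  simpa only [Function.comp_def, Equiv.apply_symm_apply] using h

end Measurability

/-- The closure, under convergence in measure, of the set of products `ω ↦ β(ω) ⬝ α(ω)`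
(`β` bounded measurable with values in ℝʳ) equals the set of (classes of) measurable
functions `γ` such that `γ(ω)` lies in the row span of `α(ω)` for μ-a.e. `ω`. -/
theorem stmt_3 {Ω : Type*} [MeasurableSpace Ω] (μ : Measure Ω) [IsProbabilityMeasure μ]
    (r n : ℕ) (α : Ω → Matrix (Fin r) (Fin n) ℝ)
    (hα : ∀ i j, Measurable fun ω => α ω i j) :
    { γ : Ω → (Fin n → ℝ) | Measurable γ ∧
        ∃ β : ℕ → Ω → (Fin r → ℝ), (∀ k, Measurable (β k)) ∧
          (∀ k, ∃ C : ℝ, ∀ ω i, |β k ω i| ≤ C) ∧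
          TendstoInMeasure μ (fun k ω => Matrix.vecMul (β k ω) (α ω)) atTop γ } =
      { γ : Ω → (Fin n → ℝ) | Measurable γ ∧
        ∀ᵐ ω ∂μ, γ ω ∈ Submodule.span ℝ (Set.range fun i => α ω i) } := by
  ext γ
  refine ⟨fun ⟨hγ, β, _, _, hβ⟩ => ⟨hγ, ?_⟩, fun ⟨hγ, hspan⟩ => ⟨hγ, ?_⟩⟩
  · refine hβ.ae_mem (fun ω => Submodule.closed_of_finiteDimensional _)
      fun k => ae_of_all _ fun ω => ?_
    exact (mem_span_range_row_iff_exists_vecMul (α ω) _).2 ⟨β k ω, rfl⟩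
  · set β := fun (k : ℕ) ω => cutoff k (tikhonov (α ω) (1 / ((k : ℝ) + 1)) (γ ω))
    have hβ (k : ℕ) : Measurable (β k) :=
      (measurable_tikhonov hα hγ (by positivity)).cutoff _
    refine ⟨β, hβ, fun k => ⟨√k, fun ω i => abs_cutoff_apply_le _ _ i⟩, ?_⟩
    refine tendstoInMeasure_of_tendsto_ae
      (fun k => (measurable_vecMul hα (hβ k)).aestronglyMeasurable) ?_
    filter_upwards [hspan] with ω hω
    exact tendsto_vecMul_cutoff_tikhonov (α ω) hω
end

section
/- Let (Ω, 𝓕, μ) be a probability space, let α : Ω → Matrix (Fin r) (Fin n) ℝ be measurable, and let γ : Ω → ℝ^n be measurable with γ(ω) belonging to the row span of α(ω) for μ-a.e. ω. Then there exists a measurable β : Ω → ℝ^r such that γ(ω) = β(ω) ⬝ α(ω) for μ-a.e. ω. -/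
/-!
If the rows `B` of `A` indexed by `s` are linearly independent, their Gram matrix `B Bᵀ` is
invertible, and `γ Bᵀ (B Bᵀ)⁻¹`, extended by zero off `s`, solves `β ⬝ A = γ` whenever `γ`
lies in the span of those rows. For every `s` this candidate is a measurable function of
`(A, γ)`, and every vector of the row span lies in the span of some independent set of rows,
so at each `ω` one of the finitely many candidates solves the system; choosing the first one
that does is measurable.
-/

open MeasureTheory Matrix

theorem exists_measurable_select_of_finset {α β ι : Type*} [MeasurableSpace α]
    [MeasurableSpace β] [Nonempty β] (s : Finset ι) {f : ι → α → β} (hf : ∀ i, Measurable (f i))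
    {p : α → β → Prop} (hp : ∀ i, MeasurableSet {x | p x (f i x)}) :
    ∃ g : α → β, Measurable g ∧ ∀ x, (∃ i ∈ s, p x (f i x)) → p x (g x) := by
  classical
  induction s using Finset.induction_on with
  | empty => exact ⟨fun _ => Classical.arbitrary β, measurable_const, by simp⟩
  | insert i s _ ih =>
    obtain ⟨g, hg, hgp⟩ := ih
    refine ⟨{x | p x (f i x)}.piecewise (f i) g, (hf i).piecewise (hp i) hg, ?_⟩
    rintro x ⟨j, hj, hpj⟩
    by_cases hx : p x (f i x)
    · rwa [Set.piecewise_eq_of_mem _ _ _ (show x ∈ {x | p x (f i x)} from hx)]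
    · rw [Set.piecewise_eq_of_notMem _ _ _ (show x ∉ {x | p x (f i x)} from hx)]
      obtain rfl | hj := Finset.mem_insert.mp hj
      · exact absurd hpj hx
      · exact hgp x ⟨j, hj, hpj⟩

section RowSpan

variable {κ m n R : Type*} [Fintype κ] [DecidableEq κ] [Fintype n] [CommRing R]

noncomputable def rowSpanCoeffs (B : Matrix κ n R) (g : n → R) : κ → R :=
  g ᵥ* (Bᵀ * (B * Bᵀ)⁻¹)

theorem rowSpanCoeffs_vecMul {B : Matrix κ n R} (hB : IsUnit (B * Bᵀ)) {g : n → R}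
    (hg : g ∈ Submodule.span R (Set.range B.row)) : rowSpanCoeffs B g ᵥ* B = g := by
  obtain ⟨c, rfl⟩ : ∃ c, c ᵥ* B = g := by rwa [← range_vecMulLinear] at hg
  rw [rowSpanCoeffs, vecMul_vecMul, vecMul_vecMul, ← Matrix.mul_assoc, ← Matrix.mul_assoc,
    mul_nonsing_inv _ ((isUnit_iff_isUnit_det _).mp hB), Matrix.one_mul]

variable [Fintype m] [DecidableEq m]

noncomputable def solveOnRows (A : Matrix m n R) (s : Finset m) (g : n → R) : m → R :=
  rowSpanCoeffs (A.submatrix (↑) id) g ᵥ* (1 : Matrix m m R).submatrix ((↑) : s → m) id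

theorem solveOnRows_vecMul {A : Matrix m n R} {s : Finset m} {g : n → R}
    (hs : IsUnit (A.submatrix ((↑) : s → m) id * (A.submatrix ((↑) : s → m) id)ᵀ))
    (hg : g ∈ Submodule.span R (Set.range (A.submatrix ((↑) : s → m) id).row)) :
    solveOnRows A s g ᵥ* A = g := by
  have hsel : (1 : Matrix m m R).submatrix ((↑) : s → m) id * A = A.submatrix (↑) id :=
    one_submatrix_mul _ (Equiv.refl m) A
  rw [solveOnRows, vecMul_vecMul, hsel, rowSpanCoeffs_vecMul hs hg]

end RowSpan

theorem isUnit_mul_transpose_self {κ n : Type*} [Fintype κ] [DecidableEq κ] [Fintype n]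
    {B : Matrix κ n ℝ} (hB : LinearIndependent ℝ B.row) : IsUnit (B * Bᵀ) := by
  rw [← conjTranspose_eq_transpose_of_trivial]
  exact (PosDef.mul_conjTranspose_self B (vecMul_injective_iff.mpr hB)).isUnit

theorem exists_finset_linearIndepOn_mem_span {ι K V : Type*} [Finite ι] [DivisionRing K]
    [AddCommGroup V] [Module K V] {v : ι → V} {g : V}
    (hg : g ∈ Submodule.span K (Set.range v)) :
    ∃ s : Finset ι, LinearIndepOn K v (s : Set ι) ∧ g ∈ Submodule.span K (v '' s) := by
  obtain ⟨b, -, -, hspan, hind⟩ :=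
    exists_linearIndepOn_extension (linearIndepOn_empty K v) (Set.empty_subset Set.univ)
  refine ⟨b.toFinite.toFinset, ?_⟩
  rw [Set.Finite.coe_toFinset]
  exact ⟨hind, Submodule.span_le.mpr (Set.image_univ ▸ hspan) hg⟩

theorem exists_solveOnRows_vecMul {m n : Type*} [Fintype m] [DecidableEq m] [Fintype n]
    {A : Matrix m n ℝ} {g : n → ℝ} (hg : g ∈ Submodule.span ℝ (Set.range A.row)) :
    ∃ s : Finset m, solveOnRows A s g ᵥ* A = g := by
  obtain ⟨s, hind, hspan⟩ := exists_finset_linearIndepOn_mem_span hg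
  rw [Set.image_eq_range] at hspan
  exact ⟨s, solveOnRows_vecMul (isUnit_mul_transpose_self hind) hspan⟩

section MeasurableEntries

variable {Ω R : Type*} [MeasurableSpace Ω] [MeasurableSpace R] {l m n : Type*} [Fintype m]

theorem measurable_mul_apply [NonUnitalNonAssocSemiring R] [MeasurableAdd₂ R] [MeasurableMul₂ R]
    {M : Ω → Matrix l m R} {N : Ω → Matrix m n R}
    (hM : ∀ i j, Measurable fun ω => M ω i j) (hN : ∀ i j, Measurable fun ω => N ω i j)
    (i : l) (k : n) :
    Measurable fun ω => (M ω * N ω) i k := by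
  simp only [mul_apply]
  exact Finset.measurable_sum _ fun j _ => (hM i j).mul (hN j k)

theorem measurable_vecMul_s4 [NonUnitalNonAssocSemiring R] [MeasurableAdd₂ R] [MeasurableMul₂ R]
    {v : Ω → m → R} (hv : Measurable v) {M : Ω → Matrix m n R}
    (hM : ∀ i j, Measurable fun ω => M ω i j) : Measurable fun ω => v ω ᵥ* M ω := by
  refine measurable_pi_lambda _ fun k => ?_
  simp only [vecMul, dotProduct]
  exact Finset.measurable_sum _ fun j _ => (measurable_pi_apply j |>.comp hv).mul (hM j k)

theorem measurable_det [CommRing R] [MeasurableAdd₂ R] [MeasurableMul₂ R] [DecidableEq m]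
    {M : Ω → Matrix m m R} (hM : ∀ i j, Measurable fun ω => M ω i j) :
    Measurable fun ω => (M ω).det := by
  simp only [det_apply']
  exact Finset.measurable_sum _ fun σ _ =>
    (Finset.measurable_prod _ fun i _ => hM _ _).const_mul _

theorem measurable_inv_apply [Field R] [MeasurableAdd₂ R] [MeasurableMul₂ R] [MeasurableInv R]
    [DecidableEq m] {M : Ω → Matrix m m R} (hM : ∀ i j, Measurable fun ω => M ω i j) (i j : m) :
    Measurable fun ω => (M ω)⁻¹ i j := by
  simp_rw [inv_def, Matrix.smul_apply, adjugate_apply, smul_eq_mul, Ring.inverse_eq_inv']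
  refine (measurable_det hM).inv.mul (measurable_det fun i' j' => ?_)
  rcases eq_or_ne i' j with rfl | h
  · simp only [updateRow_self]
    exact measurable_const
  · simp only [updateRow_ne h]
    exact hM _ _

end MeasurableEntries

theorem measurable_solveOnRows {Ω R m n : Type*} [MeasurableSpace Ω] [MeasurableSpace R]
    [Field R] [MeasurableAdd₂ R] [MeasurableMul₂ R] [MeasurableInv R] [DecidableEq m] [Fintype n]
    {A : Ω → Matrix m n R} (hA : ∀ i j, Measurable fun ω => A ω i j) {g : Ω → n → R}
    (hg : Measurable g) (s : Finset m) : Measurable fun ω => solveOnRows (A ω) s (g ω) := by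
  have hB : ∀ i j, Measurable fun ω => (A ω).submatrix ((↑) : s → m) id i j :=
    fun _ _ => hA _ _
  have hBt : ∀ i j, Measurable fun ω => ((A ω).submatrix ((↑) : s → m) id)ᵀ i j :=
    fun _ _ => hA _ _
  have hcoeffs := measurable_mul_apply hBt (measurable_inv_apply (measurable_mul_apply hB hBt))
  exact measurable_vecMul_s4 (measurable_vecMul_s4 hg hcoeffs) fun _ _ => measurable_const

theorem stmt_4_general {Ω : Type*} [MeasurableSpace Ω] (μ : Measure Ω)
    (r n : ℕ) (α : Ω → Matrix (Fin r) (Fin n) ℝ)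
    (hα : ∀ i j, Measurable fun ω => α ω i j)
    (γ : Ω → (Fin n → ℝ)) (hγ : Measurable γ)
    (hspan : ∀ᵐ ω ∂μ, γ ω ∈ Submodule.span ℝ (Set.range fun i => α ω i)) :
    ∃ β : Ω → (Fin r → ℝ), Measurable β ∧
      ∀ᵐ ω ∂μ, γ ω = Matrix.vecMul (β ω) (α ω) := by
  have hsolve (s : Finset (Fin r)) : Measurable fun ω => solveOnRows (α ω) s (γ ω) :=
    measurable_solveOnRows hα hγ s
  obtain ⟨β, hβ, hβ_solves⟩ := exists_measurable_select_of_finset Finset.univ hsolve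
    (p := fun ω b => γ ω = b ᵥ* α ω)
    fun s => measurableSet_eq_fun hγ (measurable_vecMul_s4 (hsolve s) hα)
  refine ⟨β, hβ, ?_⟩
  filter_upwards [hspan] with ω hω
  obtain ⟨s, hs⟩ := exists_solveOnRows_vecMul hω
  exact hβ_solves ω ⟨s, Finset.mem_univ s, hs.symm⟩

/-- Measurable solvability of linear systems: if `γ(ω)` lies a.e. in the row span of a
measurable matrix field `α(ω)`, then `γ(ω) = β(ω) ⬝ α(ω)` a.e. for some measurable `β`. -/
theorem stmt_4 {Ω : Type*} [MeasurableSpace Ω] (μ : Measure Ω) [IsProbabilityMeasure μ]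
    (r n : ℕ) (α : Ω → Matrix (Fin r) (Fin n) ℝ)
    (hα : ∀ i j, Measurable fun ω => α ω i j)
    (γ : Ω → (Fin n → ℝ)) (hγ : Measurable γ)
    (hspan : ∀ᵐ ω ∂μ, γ ω ∈ Submodule.span ℝ (Set.range fun i => α ω i)) :
    ∃ β : Ω → (Fin r → ℝ), Measurable β ∧
      ∀ᵐ ω ∂μ, γ ω = Matrix.vecMul (β ω) (α ω) :=
  stmt_4_general μ r n α hα γ hγ hspan
end

section
/- Let (Ω, 𝓕, μ) be a probability space, let M : Ω → Matrix (Fin n) (Fin i) ℝ be measurable, and let F = { ω : rank M(ω) < n }. Then there exists a measurable λ : Ω → ℝ^n such that for μ-a.e. ω ∈ F one has λ(ω) ≠ 0 and λ(ω) ⬝ M(ω) = 0. -/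
/-!
For a set `R` of row indices, `G_R = M Mᵀ + Σ_{i ∈ R} eᵢ eᵢᵀ` is `B Bᵀ` with
`B = [M | (eᵢ)_{i ∈ R}]`, so its kernel consists of the left-kernel vectors of `M` vanishing on
`R`. When that left kernel is nontrivial, take `R` maximal such that some nonzero `v` in it
vanishes on `R`, and `p` with `v p ≠ 0`. Then the kernel of `G_R` meets `{u | u p = 0}` only in
`0`, which forces the cofactor `adj(G_R) p p` to be nonzero; since `det G_R = 0`, row `p` of
`adj(G_R)` is then a nonzero vector in the left kernel of `M`. These finitely many candidate rows
depend continuously on `M ω`, and choosing at each `ω` the first candidate that works is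
measurable.
-/

open MeasureTheory Matrix

section LeftKernel

variable {K ι κ : Type*} [Field K] [Fintype ι] [Fintype κ]

theorem Matrix.exists_vecMul_eq_zero_of_rank_lt {M : Matrix ι κ K}
    (h : M.rank < Fintype.card ι) : ∃ v ≠ 0, v ᵥ* M = 0 := by
  by_contra! hM
  have hinj : Function.Injective Mᵀ.mulVecLin := by
    rw [← LinearMap.ker_eq_bot, LinearMap.ker_eq_bot']
    intro v hv
    by_contra hv0
    exact hM v hv0 (by rwa [mulVecLin_apply, mulVec_transpose] at hv)
  rw [← rank_transpose, rank, LinearMap.finrank_range_of_inj hinj,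
    Module.finrank_fintype_fun_eq_card] at h
  exact lt_irrefl _ h

theorem Matrix.adjugate_apply_self_ne_zero [DecidableEq ι] {A : Matrix ι ι K} {v : ι → K}
    {p : ι} (hv : v ᵥ* A = 0) (hvp : v p ≠ 0)
    (hA : ∀ u, A *ᵥ u = 0 → u p = 0 → u = 0) :
    A.adjugate p p ≠ 0 := by
  -- a kernel vector `u` of `A` with row `p` replaced by `eₚ` has `u p = 0` and
  -- `A u ∈ K ∙ eₚ`; pairing `A u` with `v` shows `A u = 0`
  rw [adjugate_apply]
  intro hdet
  obtain ⟨u, hu0, hu⟩ := exists_mulVec_eq_zero_iff.mpr hdet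
  have hup : u p = 0 := by
    simpa [mulVec, updateRow_self] using congrFun hu p
  have hAu : A *ᵥ u = Pi.single p ((A *ᵥ u) p) := by
    ext j
    rcases eq_or_ne j p with rfl | hjp
    · simp
    · simpa [mulVec, updateRow_ne hjp, hjp] using congrFun hu j
  have hAup : (A *ᵥ u) p = 0 := by
    have := dotProduct_mulVec v A u
    rw [hv, zero_dotProduct, hAu, dotProduct_single, mul_eq_zero] at this
    exact this.resolve_left hvp
  exact hu0 (hA u (by rw [hAu, hAup, Pi.single_zero]) hup)

end LeftKernel

section PinnedGram

variable {K ι κ : Type*} [DecidableEq ι] [Fintype κ]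

def pinnedGram [CommRing K] (M : Matrix ι κ K) (R : Finset ι) : Matrix ι ι K :=
  M * Mᵀ + diagonal fun i => if i ∈ R then 1 else 0

theorem pinnedGram_transpose [CommRing K] (M : Matrix ι κ K) (R : Finset ι) :
    (pinnedGram M R)ᵀ = pinnedGram M R := by
  simp [pinnedGram, transpose_add, transpose_mul]

theorem vecMul_pinnedGram_dotProduct [CommRing K] [Fintype ι] (M : Matrix ι κ K) (R : Finset ι)
    (w : ι → K) :
    (w ᵥ* pinnedGram M R) ⬝ᵥ w = (w ᵥ* M) ⬝ᵥ (w ᵥ* M) + ∑ i ∈ R, w i * w i := by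
  rw [pinnedGram, vecMul_add, add_dotProduct, ← vecMul_vecMul, vecMul_transpose,
    dotProduct_comm _ w, dotProduct_mulVec]
  congr 1
  simp only [dotProduct, vecMul_diagonal, mul_ite, mul_one, mul_zero, ite_mul, zero_mul]
  rw [Finset.sum_ite_mem, Finset.univ_inter]

theorem vecMul_pinnedGram_eq_zero_iff [CommRing K] [LinearOrder K] [IsStrictOrderedRing K]
    [Fintype ι] {M : Matrix ι κ K} {R : Finset ι} {w : ι → K} :
    w ᵥ* pinnedGram M R = 0 ↔ w ᵥ* M = 0 ∧ ∀ i ∈ R, w i = 0 := by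
  constructor
  · intro hw
    have hsum := vecMul_pinnedGram_dotProduct M R w
    have hM : 0 ≤ (w ᵥ* M) ⬝ᵥ (w ᵥ* M) := Finset.sum_nonneg fun j _ => mul_self_nonneg _
    rw [hw, zero_dotProduct, eq_comm,
      add_eq_zero_iff_of_nonneg hM (Finset.sum_nonneg fun i _ => mul_self_nonneg _),
      Finset.sum_eq_zero_iff_of_nonneg fun i _ => mul_self_nonneg _] at hsum
    exact ⟨dotProduct_self_eq_zero.mp hsum.1, fun i hi => mul_self_eq_zero.mp (hsum.2 i hi)⟩
  · rintro ⟨hwM, hwR⟩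
    ext j
    by_cases hj : j ∈ R <;>
      simp [pinnedGram, vecMul_add, ← vecMul_vecMul, vecMul_diagonal, hwM, hj, hwR]

theorem exists_adjugate_pinnedGram_row_mem_leftKernel [Field K] [LinearOrder K]
    [IsStrictOrderedRing K] [Fintype ι] {M : Matrix ι κ K} {v : ι → K} (hv0 : v ≠ 0)
    (hvM : v ᵥ* M = 0) :
    ∃ (R : Finset ι) (p : ι), adjugate (pinnedGram M R) p ≠ 0 ∧
      adjugate (pinnedGram M R) p ᵥ* M = 0 := by
  classical
  let Pinned (R : Finset ι) : Prop := ∃ v ≠ 0, v ᵥ* M = 0 ∧ ∀ i ∈ R, v i = 0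
  obtain ⟨R, hR, hRmax⟩ := Finset.exists_max_image {R | Pinned R} Finset.card
    ⟨∅, Finset.mem_filter.mpr ⟨Finset.mem_univ _, v, hv0, hvM, by simp⟩⟩
  obtain ⟨v, hv0, hvM, hvR⟩ := (Finset.mem_filter.mp hR).2
  obtain ⟨p, hvp⟩ := Function.ne_iff.mp hv0
  have hvG : v ᵥ* pinnedGram M R = 0 := vecMul_pinnedGram_eq_zero_iff.mpr ⟨hvM, hvR⟩
  -- by maximality of `R`
  have hG : ∀ u, pinnedGram M R *ᵥ u = 0 → u p = 0 → u = 0 := by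
    intro u hu hup
    rw [← pinnedGram_transpose, mulVec_transpose, vecMul_pinnedGram_eq_zero_iff] at hu
    by_contra hu0
    have hpR : p ∉ R := fun hp => hvp (hvR p hp)
    have := hRmax (insert p R) (Finset.mem_filter.mpr ⟨Finset.mem_univ _, u, hu0, hu.1,
      Finset.forall_mem_insert _ _ _ |>.mpr ⟨hup, hu.2⟩⟩)
    rw [Finset.card_insert_of_notMem hpR] at this
    omega
  have hadj : adjugate (pinnedGram M R) p p ≠ 0 := adjugate_apply_self_ne_zero hvG hvp hG
  have hdet : (pinnedGram M R).det = 0 := exists_vecMul_eq_zero_iff.mp ⟨v, hv0, hvG⟩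
  have hrow : adjugate (pinnedGram M R) p ᵥ* pinnedGram M R = 0 := by
    change (adjugate (pinnedGram M R) * pinnedGram M R) p = 0
    rw [adjugate_mul, hdet, zero_smul]
    rfl
  exact ⟨R, p, fun h => hadj (congrFun h p), (vecMul_pinnedGram_eq_zero_iff.mp hrow).1⟩

end PinnedGram

theorem exists_measurable_forall_of_exists {ι Ω β : Type*} [Finite ι] [MeasurableSpace Ω]
    [MeasurableSpace β] [Nonempty β] {g : ι → Ω → β} (hg : ∀ k, Measurable (g k))
    {P : Ω → β → Prop} (hP : ∀ k, MeasurableSet {ω | P ω (g k ω)}) :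
    ∃ f : Ω → β, Measurable f ∧ ∀ ω k, P ω (g k ω) → P ω (f ω) := by
  classical
  have := Fintype.ofFinite ι
  suffices ∀ s : Finset ι, ∃ f : Ω → β, Measurable f ∧
      ∀ ω, ∀ k ∈ s, P ω (g k ω) → P ω (f ω) by
    obtain ⟨f, hf, hfP⟩ := this Finset.univ
    exact ⟨f, hf, fun ω k => hfP ω k (Finset.mem_univ k)⟩
  intro s
  induction s using Finset.induction_on with
  | empty => exact ⟨fun _ => Classical.arbitrary β, measurable_const, by simp⟩
  | insert a s _ ih =>
    obtain ⟨f, hf, hfP⟩ := ih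
    refine ⟨{ω | P ω (g a ω)}.piecewise (g a) f, (hg a).piecewise (hP a) hf, ?_⟩
    intro ω k hk hPk
    by_cases ha : P ω (g a ω)
    · simp [Set.piecewise, ha]
    · obtain rfl | hks := Finset.mem_insert.mp hk
      · exact absurd hPk ha
      · simpa [Set.piecewise, ha] using hfP ω k hks hPk

theorem Continuous.measurable_comp_matrix {Ω ι κ β : Type*} [MeasurableSpace Ω] [Fintype ι]
    [Fintype κ] [TopologicalSpace β] [MeasurableSpace β] [BorelSpace β]
    {f : Matrix ι κ ℝ → β} (hf : Continuous f) {M : Ω → Matrix ι κ ℝ}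
    (hM : ∀ i j, Measurable fun ω => M ω i j) :
    Measurable fun ω => f (M ω) :=
  (show Continuous fun A : ι → κ → ℝ => f (Matrix.of A) from hf).measurable.comp
    (measurable_pi_lambda _ fun i => measurable_pi_lambda _ (hM i))

theorem stmt_5_general {Ω : Type*} [MeasurableSpace Ω] (μ : Measure Ω)
    (n m : ℕ) (M : Ω → Matrix (Fin n) (Fin m) ℝ)
    (hM : ∀ i j, Measurable fun ω => M ω i j)
    (F : Set Ω) (hF : F = {ω | (M ω).rank < n}) :
    ∃ l : Ω → (Fin n → ℝ), Measurable l ∧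
      ∀ᵐ ω ∂μ, ω ∈ F → l ω ≠ 0 ∧ Matrix.vecMul (l ω) (M ω) = 0 := by
  let g (k : Finset (Fin n) × Fin n) (ω : Ω) : Fin n → ℝ :=
    adjugate (pinnedGram (M ω) k.1) k.2
  have hg : ∀ k, Measurable (g k) := fun k =>
    Continuous.measurable_comp_matrix (f := fun A => adjugate (pinnedGram A k.1) k.2)
      (by unfold pinnedGram; fun_prop) hM
  have hgM : ∀ k, Measurable fun ω => g k ω ᵥ* M ω := fun k =>
    Continuous.measurable_comp_matrix (f := fun A => adjugate (pinnedGram A k.1) k.2 ᵥ* A)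
      (by unfold pinnedGram; fun_prop) hM
  obtain ⟨l, hl, hlP⟩ := exists_measurable_forall_of_exists hg
    (P := fun ω v => v ≠ 0 ∧ v ᵥ* M ω = 0) fun k =>
      ((hg k) (measurableSet_singleton 0)).compl.inter (hgM k (measurableSet_singleton 0))
  refine ⟨l, hl, Filter.Eventually.of_forall fun ω hω => ?_⟩
  rw [hF] at hω
  obtain ⟨v, hv0, hvM⟩ := exists_vecMul_eq_zero_of_rank_lt (M := M ω) (by simpa using hω)
  obtain ⟨R, p, hRp⟩ := exists_adjugate_pinnedGram_row_mem_leftKernel hv0 hvM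
  exact hlP ω (R, p) hRp

/-- Measurable selection of a nonvanishing left-kernel vector on the set where a
measurable matrix field has rank less than `n`. -/
theorem stmt_5 {Ω : Type*} [MeasurableSpace Ω] (μ : Measure Ω) [IsProbabilityMeasure μ]
    (n m : ℕ) (M : Ω → Matrix (Fin n) (Fin m) ℝ)
    (hM : ∀ i j, Measurable fun ω => M ω i j)
    (F : Set Ω) (hF : F = {ω | (M ω).rank < n}) :
    ∃ l : Ω → (Fin n → ℝ), Measurable l ∧
      ∀ᵐ ω ∂μ, ω ∈ F → l ω ≠ 0 ∧ Matrix.vecMul (l ω) (M ω) = 0 :=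
  stmt_5_general μ n m M hM F hF
end

section
/- Let (Ω, 𝓕, μ) be a probability space, let θ : Ω → Matrix (Fin r) (Fin n) ℝ be measurable, let s ≤ min(r, n), and let G = { ω : rank θ(ω) = s }. Then there exist measurable maps β : Ω → Matrix (Fin r) (Fin s) ℝ and δ : Ω → Matrix (Fin s) (Fin n) ℝ such that for μ-a.e. ω ∈ G one has θ(ω) = β(ω) * δ(ω) and rank δ(ω) = s. -/
/-!
If `A` has rank `s`, some `s × s` minor `M = A[f, g]` is invertible, and then
`A = A[·, g] * (M⁻¹ * A[f, ·])`: the columns `g` already span the column space of `A`.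
There are only finitely many candidate index pairs `(f, g)`, each with a measurable set of `ω`
on which that minor of `θ ω` is invertible and the factorization is measurable, so gluing these
factorizations piecewise gives measurable factors.
-/

open MeasureTheory

namespace Matrix

variable {K : Type*} [Field K] {m k ι : Type*} [Fintype k]

theorem exists_linearIndependent_cols_of_rank_eq (A : Matrix m k K) {s : ℕ} (h : A.rank = s) :
    ∃ g : Fin s → k, LinearIndependent K fun j => A.col (g j) := by
  obtain ⟨κ, a, ha, hspan, hli⟩ := exists_linearIndependent' K A.col
  have : Finite κ := Finite.of_injective a ha
  have : Fintype κ := Fintype.ofFinite κ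
  have hcard : Fintype.card κ = s := by
    rw [← h, rank_eq_finrank_span_cols, ← hspan, finrank_span_eq_card hli]
  let e : Fin s ≃ κ := (Fintype.equivFinOfCardEq hcard).symm
  exact ⟨a ∘ e, hli.comp e e.injective⟩

theorem exists_submatrix_det_ne_zero_of_rank_eq [Fintype m] (A : Matrix m k K) {s : ℕ}
    (h : A.rank = s) : ∃ (f : Fin s → m) (g : Fin s → k), (A.submatrix f g).det ≠ 0 := by
  obtain ⟨g, hg⟩ := A.exists_linearIndependent_cols_of_rank_eq h
  have hrank : (A.submatrix id g)ᵀ.rank = s := by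
    rw [rank_transpose, rank_eq_finrank_span_cols]
    exact (finrank_span_eq_card hg).trans (Fintype.card_fin s)
  obtain ⟨f, hf⟩ := (A.submatrix id g)ᵀ.exists_linearIndependent_cols_of_rank_eq hrank
  exact ⟨f, g, ((isUnit_iff_isUnit_det _).1 (linearIndependent_rows_iff_isUnit.1 hf)).ne_zero⟩

variable [Fintype ι]

theorem exists_eq_mul_of_range_le {R : Type*} [CommSemiring R] (A : Matrix m k R)
    (B : Matrix m ι R) (h : LinearMap.range A.mulVecLin ≤ LinearMap.range B.mulVecLin) :
    ∃ X : Matrix ι k R, A = B * X := by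
  have hcol : ∀ j, ∃ x, B *ᵥ x = A.col j := fun j =>
    h (by rw [range_mulVecLin]; exact Submodule.subset_span ⟨j, rfl⟩)
  choose x hx using hcol
  exact ⟨(of x)ᵀ, ext fun i j => (congrFun (hx j) i).symm⟩

theorem range_mulVecLin_submatrix_id_eq (A : Matrix m k K) (g : ι → k)
    (h : A.rank ≤ (A.submatrix id g).rank) :
    LinearMap.range (A.submatrix id g).mulVecLin = LinearMap.range A.mulVecLin := by
  refine Submodule.eq_of_le_of_finrank_le ?_ h
  rw [range_mulVecLin, range_mulVecLin]
  exact Submodule.span_mono (Set.range_comp_subset_range g A.col)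

variable [DecidableEq ι]

theorem eq_submatrix_mul_inv_mul_submatrix (A : Matrix m k K) (f : ι → m) (g : ι → k)
    (hd : (A.submatrix f g).det ≠ 0) (hr : A.rank ≤ Fintype.card ι) :
    A = A.submatrix id g * ((A.submatrix f g)⁻¹ * A.submatrix f id) := by
  have hcols : Fintype.card ι ≤ (A.submatrix id g).rank :=
    (rank_of_det_ne_zero hd).ge.trans (rank_submatrix_le (A.submatrix id g) f id)
  obtain ⟨X, hX⟩ := exists_eq_mul_of_range_le A (A.submatrix id g)
    (range_mulVecLin_submatrix_id_eq A g (hr.trans hcols)).ge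
  have hrows : A.submatrix f id = A.submatrix f g * X := by
    conv_lhs => rw [hX]
    rw [submatrix_mul _ _ f id id Function.bijective_id]
    rfl
  rw [hrows, nonsing_inv_mul_cancel_left _ _ (isUnit_iff_ne_zero.2 hd)]
  exact hX

theorem rank_inv_mul_submatrix (A : Matrix m k K) (f : ι → m) (g : ι → k)
    (hd : (A.submatrix f g).det ≠ 0) :
    ((A.submatrix f g)⁻¹ * A.submatrix f id).rank = Fintype.card ι := by
  rw [rank_mul_eq_right_of_isUnit_det _ _ (isUnit_nonsing_inv_det _ (isUnit_iff_ne_zero.2 hd))]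
  exact le_antisymm (rank_le_card_height _)
    ((rank_of_det_ne_zero hd).ge.trans (rank_submatrix_le (A.submatrix f id) id g))

end Matrix

section Measurability

variable {X Y : Type*} [MeasurableSpace X] [MeasurableSpace Y]

instance Matrix.instMeasurableSpace {m n α : Type*} [MeasurableSpace α] :
    MeasurableSpace (Matrix m n α) :=
  MeasurableSpace.pi

instance Matrix.instBorelSpace {m n α : Type*} [Countable m] [Countable n] [TopologicalSpace α]
    [MeasurableSpace α] [BorelSpace α] [SecondCountableTopology α] :
    BorelSpace (Matrix m n α) :=
  inferInstanceAs (BorelSpace (m → n → α))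

theorem measurable_matrix_iff {m n α : Type*} [MeasurableSpace α] {f : X → Matrix m n α} :
    Measurable f ↔ ∀ i j, Measurable fun x => f x i j :=
  measurable_pi_iff.trans <| forall_congr' fun _ => measurable_pi_iff

theorem Measurable.matrix_submatrix {l m n o α : Type*} [MeasurableSpace α]
    {f : X → Matrix m n α} (hf : Measurable f) (r : l → m) (c : o → n) :
    Measurable fun x => (f x).submatrix r c :=
  measurable_matrix_iff.2 fun i j => measurable_matrix_iff.1 hf (r i) (c j)

theorem Measurable.matrix_mul {l m n R : Type*} [Fintype m] [NonUnitalNonAssocSemiring R]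
    [MeasurableSpace R] [MeasurableMul₂ R] [MeasurableAdd₂ R]
    {f : X → Matrix l m R} {g : X → Matrix m n R} (hf : Measurable f) (hg : Measurable g) :
    Measurable fun x => f x * g x :=
  measurable_matrix_iff.2 fun i j => by
    simp only [Matrix.mul_apply]
    exact Finset.measurable_sum _ fun k _ =>
      (measurable_matrix_iff.1 hf i k).mul (measurable_matrix_iff.1 hg k j)

variable {K : Type*} [Field K] [TopologicalSpace K] [IsTopologicalRing K]
  [SecondCountableTopology K] [MeasurableSpace K] [BorelSpace K]

theorem Matrix.measurable_det {m : Type*} [Fintype m] [DecidableEq m] :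
    Measurable fun A : Matrix m m K => A.det :=
  continuous_id.matrix_det.measurable

theorem Matrix.measurable_inv {m : Type*} [Fintype m] [DecidableEq m] [MeasurableInv K] :
    Measurable fun A : Matrix m m K => A⁻¹ := by
  refine measurable_matrix_iff.2 fun i j => ?_
  simp only [inv_def, Ring.inverse_eq_inv', smul_apply, smul_eq_mul]
  exact measurable_det.inv.mul
    (measurable_matrix_iff.1 continuous_id.matrix_adjugate.measurable i j)

theorem exists_measurable_forall_mem_exists_eq {ι : Type*} [Finite ι] [Nonempty Y]
    {S : ι → Set X} (hS : ∀ i, MeasurableSet (S i)) {F : ι → X → Y}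
    (hF : ∀ i, Measurable (F i)) :
    ∃ G : X → Y, Measurable G ∧ ∀ x i, x ∈ S i → ∃ j, x ∈ S j ∧ G x = F j x := by
  classical
  have : Fintype ι := Fintype.ofFinite ι
  suffices ∀ t : Finset ι, ∃ G : X → Y, Measurable G ∧
      ∀ x, ∀ i ∈ t, x ∈ S i → ∃ j, x ∈ S j ∧ G x = F j x by
    obtain ⟨G, hG, hGS⟩ := this Finset.univ
    exact ⟨G, hG, fun x i => hGS x i (Finset.mem_univ i)⟩
  intro t
  induction t using Finset.induction_on with
  | empty => exact ⟨fun _ => Classical.arbitrary Y, measurable_const, by simp⟩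
  | insert i t _ ih =>
    obtain ⟨G, hG, hGS⟩ := ih
    refine ⟨(S i).piecewise (F i) G, (hF i).piecewise (hS i) hG, fun x j hj hxj => ?_⟩
    by_cases hxi : x ∈ S i
    · exact ⟨i, hxi, Set.piecewise_eq_of_mem _ _ _ hxi⟩
    · obtain ⟨l, hxl, hGl⟩ := hGS x j ((Finset.mem_insert.1 hj).resolve_left
        (by rintro rfl; exact hxi hxj)) hxj
      exact ⟨l, hxl, (Set.piecewise_eq_of_notMem _ _ _ hxi).trans hGl⟩

end Measurability

theorem stmt_6_general {Ω : Type*} [MeasurableSpace Ω] (μ : Measure Ω)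
    (r n s : ℕ) (θ : Ω → Matrix (Fin r) (Fin n) ℝ)
    (hθ : ∀ i j, Measurable fun ω => θ ω i j)
    (G : Set Ω) (hG : G = {ω | (θ ω).rank = s}) :
    ∃ (β : Ω → Matrix (Fin r) (Fin s) ℝ) (δ : Ω → Matrix (Fin s) (Fin n) ℝ),
      (∀ i j, Measurable fun ω => β ω i j) ∧ (∀ i j, Measurable fun ω => δ ω i j) ∧
      ∀ᵐ ω ∂μ, ω ∈ G → θ ω = β ω * δ ω ∧ (δ ω).rank = s := by
  subst hG
  have hθm : Measurable θ := measurable_matrix_iff.2 hθ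
  obtain ⟨Φ, hΦ, hΦ_eq⟩ := exists_measurable_forall_mem_exists_eq
    (S := fun p : (Fin s → Fin r) × (Fin s → Fin n) =>
      {ω | ((θ ω).submatrix p.1 p.2).det ≠ 0})
    (fun p => (Matrix.measurable_det.comp (hθm.matrix_submatrix p.1 p.2))
      (measurableSet_singleton 0).compl)
    (F := fun p ω =>
      ((θ ω).submatrix id p.2, ((θ ω).submatrix p.1 p.2)⁻¹ * (θ ω).submatrix p.1 id))
    (fun p => (hθm.matrix_submatrix id p.2).prodMk
      ((Matrix.measurable_inv.comp (hθm.matrix_submatrix p.1 p.2)).matrix_mul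
        (hθm.matrix_submatrix p.1 id)))
  refine ⟨fun ω => (Φ ω).1, fun ω => (Φ ω).2, measurable_matrix_iff.1 hΦ.fst,
    measurable_matrix_iff.1 hΦ.snd, ae_of_all μ fun ω (hω : (θ ω).rank = s) => ?_⟩
  obtain ⟨f, g, hfg⟩ := (θ ω).exists_submatrix_det_ne_zero_of_rank_eq hω
  obtain ⟨p, hp, hΦp⟩ := hΦ_eq ω (f, g) hfg
  dsimp only
  rw [hΦp]
  refine ⟨(θ ω).eq_submatrix_mul_inv_mul_submatrix p.1 p.2 hp ?_, ?_⟩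
  · rw [hω, Fintype.card_fin]
  · rw [Matrix.rank_inv_mul_submatrix _ _ _ hp, Fintype.card_fin]

/-- Measurable rank factorization: on the set where a measurable matrix field `θ` has
rank `s`, one can write `θ = β * δ` with measurable factors `β` (r × s) and `δ` (s × n),
`δ` of full rank `s`. -/
theorem stmt_6 {Ω : Type*} [MeasurableSpace Ω] (μ : Measure Ω) [IsProbabilityMeasure μ]
    (r n s : ℕ) (hs : s ≤ min r n) (θ : Ω → Matrix (Fin r) (Fin n) ℝ)
    (hθ : ∀ i j, Measurable fun ω => θ ω i j)
    (G : Set Ω) (hG : G = {ω | (θ ω).rank = s}) :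
    ∃ (β : Ω → Matrix (Fin r) (Fin s) ℝ) (δ : Ω → Matrix (Fin s) (Fin n) ℝ),
      (∀ i j, Measurable fun ω => β ω i j) ∧ (∀ i j, Measurable fun ω => δ ω i j) ∧
      ∀ᵐ ω ∂μ, ω ∈ G → θ ω = β ω * δ ω ∧ (δ ω).rank = s :=
  stmt_6_general μ r n s θ hθ G hG
end

section
/- Let (Ω, 𝓕, μ) be a probability space, let r ≤ n, and let α : Ω → Matrix (Fin r) (Fin n) ℝ be measurable. Then there exist measurable maps M : Ω → Matrix (Fin r) (Fin r) ℝ and θ : Ω → Matrix (Fin r) (Fin n) ℝ such that for μ-a.e. ω one has rank θ(ω) = r and α(ω) = M(ω) * θ(ω). -/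
open MeasureTheory Matrix

noncomputable section Stmt7Aux

namespace Stmt7Aux

variable {r n : ℕ}

instance : MeasurableSpace (Matrix (Fin r) (Fin n) ℝ) :=
  inferInstanceAs (MeasurableSpace (Fin r → Fin n → ℝ))

instance : BorelSpace (Matrix (Fin r) (Fin n) ℝ) :=
  inferInstanceAs (BorelSpace (Fin r → Fin n → ℝ))

/-- Column submatrix of `A` given by the first `k` values of `g`. -/
def csub (k : ℕ) (hk : k ≤ r) (g : Fin r → Fin n) (A : Matrix (Fin r) (Fin n) ℝ) :
    Matrix (Fin r) (Fin k) ℝ := fun i a => A i (g (Fin.castLE hk a))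

def gramM (k : ℕ) (hk : k ≤ r) (g : Fin r → Fin n) (A : Matrix (Fin r) (Fin n) ℝ) :
    Matrix (Fin k) (Fin k) ℝ := (csub k hk g A)ᵀ * csub k hk g A

def Cm (k : ℕ) (hk : k ≤ r) (g : Fin r → Fin n) (A : Matrix (Fin r) (Fin n) ℝ) :
    Matrix (Fin k) (Fin n) ℝ := (gramM k hk g A)⁻¹ * ((csub k hk g A)ᵀ * A)

def good (k : ℕ) (hk : k ≤ r) (g : Fin r → Fin n) (A : Matrix (Fin r) (Fin n) ℝ) : Prop :=
  Function.Injective g ∧ IsUnit (gramM k hk g A).det ∧ csub k hk g A * Cm k hk g A = A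

def thetaC (k : ℕ) (hk : k ≤ r) (g : Fin r → Fin n) (A : Matrix (Fin r) (Fin n) ℝ) :
    Matrix (Fin r) (Fin n) ℝ := fun i j =>
  if h : (i : ℕ) < k then Cm k hk g A ⟨i, h⟩ j else if j = g i then 1 else 0

def Mcm (k : ℕ) (hk : k ≤ r) (g : Fin r → Fin n) (A : Matrix (Fin r) (Fin n) ℝ) :
    Matrix (Fin r) (Fin r) ℝ := fun i i' =>
  if (i' : ℕ) < k then A i (g i') else 0

lemma sum_dite_lt {k : ℕ} (hk : k ≤ r) (t : Fin k → ℝ) :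
    (∑ i : Fin r, if h : (i : ℕ) < k then t ⟨i, h⟩ else 0) = ∑ a : Fin k, t a := by
  calc (∑ i : Fin r, if h : (i : ℕ) < k then t ⟨i, h⟩ else 0)
      = ∑ m ∈ Finset.range r, (if h : m < k then t ⟨m, h⟩ else 0) :=
        Fin.sum_univ_eq_sum_range (fun m => if h : m < k then t ⟨m, h⟩ else 0) r
    _ = ∑ m ∈ Finset.range k, (if h : m < k then t ⟨m, h⟩ else 0) := by
        symm
        apply Finset.sum_subset (Finset.range_subset_range.2 hk)
        intro m _ hm
        rw [Finset.mem_range] at hm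
        rw [dif_neg hm]
    _ = ∑ a : Fin k, (if h : (a : ℕ) < k then t ⟨a, h⟩ else 0) :=
        (Fin.sum_univ_eq_sum_range (fun m => if h : m < k then t ⟨m, h⟩ else 0) k).symm
    _ = ∑ a : Fin k, t a := Finset.sum_congr rfl fun a _ => by simp

lemma castLE_coe {k : ℕ} (hk : k ≤ r) (i : Fin r) (h : (i : ℕ) < k) :
    Fin.castLE hk ⟨(i : ℕ), h⟩ = i := rfl

lemma factor {k : ℕ} (hk : k ≤ r) (g : Fin r → Fin n) (A : Matrix (Fin r) (Fin n) ℝ)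
    (hg : good k hk g A) : Mcm k hk g A * thetaC k hk g A = A := by
  ext i j
  rw [Matrix.mul_apply]
  have hsum : ∀ i' : Fin r, Mcm k hk g A i i' * thetaC k hk g A i' j
      = if h : (i' : ℕ) < k then csub k hk g A i ⟨i', h⟩ * Cm k hk g A ⟨i', h⟩ j else 0 := by
    intro i'
    by_cases h : (i' : ℕ) < k
    · rw [dif_pos h]
      simp only [Mcm, thetaC, if_pos h, dif_pos h]
      rfl
    · rw [dif_neg h]
      simp only [Mcm, if_neg h, zero_mul]
  calc (∑ i' : Fin r, Mcm k hk g A i i' * thetaC k hk g A i' j)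
      = ∑ i' : Fin r, if h : (i' : ℕ) < k then
          csub k hk g A i ⟨i', h⟩ * Cm k hk g A ⟨i', h⟩ j else 0 :=
        Finset.sum_congr rfl fun i' _ => hsum i'
    _ = ∑ a : Fin k, csub k hk g A i a * Cm k hk g A a j :=
        sum_dite_lt hk (fun a => csub k hk g A i a * Cm k hk g A a j)
    _ = (csub k hk g A * Cm k hk g A) i j := (Matrix.mul_apply).symm
    _ = A i j := by rw [hg.2.2]


lemma cm_col {k : ℕ} (hk : k ≤ r) (g : Fin r → Fin n) (A : Matrix (Fin r) (Fin n) ℝ)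
    (hdet : IsUnit (gramM k hk g A).det) {i i' : Fin r} (h : (i : ℕ) < k) (h' : (i' : ℕ) < k) :
    Cm k hk g A ⟨i, h⟩ (g i') = if i = i' then 1 else 0 := by
  have hcol : ∀ b : Fin k, ((csub k hk g A)ᵀ * A) b (g i') = gramM k hk g A b ⟨i', h'⟩ := by
    intro b
    rfl
  have : Cm k hk g A ⟨i, h⟩ (g i') = ((gramM k hk g A)⁻¹ * gramM k hk g A) ⟨i, h⟩ ⟨i', h'⟩ := by
    rw [Cm, Matrix.mul_apply, Matrix.mul_apply]
    exact Finset.sum_congr rfl fun b _ => by rw [hcol b]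
  rw [this, Matrix.nonsing_inv_mul _ hdet, Matrix.one_apply]
  by_cases hii : i = i'
  · simp [hii]
  · rw [if_neg hii, if_neg (by simpa [Fin.ext_iff] using fun hv => hii (Fin.ext hv))]

def Bsel (g : Fin r → Fin n) : Matrix (Fin n) (Fin r) ℝ := fun j i' => if j = g i' then 1 else 0

def Nm (k : ℕ) (hk : k ≤ r) (g : Fin r → Fin n) (A : Matrix (Fin r) (Fin n) ℝ) :
    Matrix (Fin r) (Fin r) ℝ := fun i i' =>
  if h : (i : ℕ) < k ∧ ¬ (i' : ℕ) < k then Cm k hk g A ⟨i, h.1⟩ (g i') else 0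

lemma nm_sq {k : ℕ} (hk : k ≤ r) (g : Fin r → Fin n) (A : Matrix (Fin r) (Fin n) ℝ) :
    Nm k hk g A * Nm k hk g A = 0 := by
  ext i i'
  rw [Matrix.mul_apply, Matrix.zero_apply]
  apply Finset.sum_eq_zero
  intro m _
  by_cases h : (i : ℕ) < k ∧ ¬ (m : ℕ) < k
  · have h2 : ¬ ((m : ℕ) < k ∧ ¬ (i' : ℕ) < k) := fun hc => h.2 hc.1
    rw [show Nm k hk g A m i' = 0 from dif_neg h2, mul_zero]
  · rw [show Nm k hk g A i m = 0 from dif_neg h, zero_mul]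

lemma theta_mul_Bsel {k : ℕ} (hk : k ≤ r) (g : Fin r → Fin n) (A : Matrix (Fin r) (Fin n) ℝ)
    (hginj : Function.Injective g) (hdet : IsUnit (gramM k hk g A).det) :
    thetaC k hk g A * Bsel g = 1 + Nm k hk g A := by
  ext i i'
  rw [Matrix.mul_apply, Matrix.add_apply, Matrix.one_apply]
  have h1 : (∑ j : Fin n, thetaC k hk g A i j * Bsel g j i') = thetaC k hk g A i (g i') := by
    have he : ∀ j : Fin n, thetaC k hk g A i j * Bsel g j i'
        = if j = g i' then thetaC k hk g A i j else 0 := by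
      intro j
      by_cases hj : j = g i' <;> simp [Bsel, hj]
    rw [Finset.sum_congr rfl fun j _ => he j,
      Finset.sum_ite_eq' Finset.univ (g i') (thetaC k hk g A i)]
    simp
  rw [h1]
  by_cases h : (i : ℕ) < k
  · have hθi : thetaC k hk g A i (g i') = Cm k hk g A ⟨i, h⟩ (g i') := dif_pos h
    by_cases h' : (i' : ℕ) < k
    · rw [hθi, cm_col hk g A hdet h h',
        show Nm k hk g A i i' = 0 from dif_neg (fun hc => hc.2 h'), add_zero]
    · rw [hθi, show Nm k hk g A i i' = Cm k hk g A ⟨i, h⟩ (g i') from dif_pos ⟨h, h'⟩,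
        if_neg (fun hii : i = i' => h' (hii ▸ h)), zero_add]
  · have hθi : thetaC k hk g A i (g i') = if g i' = g i then 1 else 0 := dif_neg h
    rw [hθi, show Nm k hk g A i i' = 0 from dif_neg (fun hc => h hc.1), add_zero]
    by_cases hii : i = i'
    · rw [if_pos hii, if_pos (by rw [hii])]
    · rw [if_neg hii, if_neg (fun hv => hii (hginj hv).symm)]

lemma theta_rank {k : ℕ} (hk : k ≤ r) (g : Fin r → Fin n) (A : Matrix (Fin r) (Fin n) ℝ)
    (hg : good k hk g A) : (thetaC k hk g A).rank = r := by
  obtain ⟨hginj, hdet, -⟩ := hg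
  have key : thetaC k hk g A * (Bsel g * (1 - Nm k hk g A)) = 1 := by
    rw [← Matrix.mul_assoc, theta_mul_Bsel hk g A hginj hdet]
    have h2 : (1 + Nm k hk g A) * (1 - Nm k hk g A) = 1 - Nm k hk g A * Nm k hk g A := by
      noncomm_ring
    rw [h2, nm_sq hk g A, sub_zero]
  refine le_antisymm (Matrix.rank_le_height _) ?_
  calc r = (1 : Matrix (Fin r) (Fin r) ℝ).rank := by rw [Matrix.rank_one, Fintype.card_fin]
    _ = (thetaC k hk g A * (Bsel g * (1 - Nm k hk g A))).rank := by rw [key]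
    _ ≤ (thetaC k hk g A).rank := Matrix.rank_mul_le_left _ _


lemma gram_ker {m p : ℕ} (B : Matrix (Fin m) (Fin p) ℝ) (x : Fin p → ℝ)
    (h : (Bᵀ * B).mulVec x = 0) : B.mulVec x = 0 := by
  have h1 : x ⬝ᵥ (Bᵀ * B).mulVec x = (B.mulVec x) ⬝ᵥ (B.mulVec x) := by
    rw [← Matrix.mulVec_mulVec, Matrix.dotProduct_mulVec, Matrix.vecMul_transpose]
  rw [h, dotProduct_zero] at h1
  exact (dotProduct_self_eq_zero).1 h1.symm

lemma gram_inj {k : ℕ} (hk : k ≤ r) (g : Fin r → Fin n) (A : Matrix (Fin r) (Fin n) ℝ)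
    (hdet : IsUnit (gramM k hk g A).det) (y : Fin k → ℝ)
    (hy : (gramM k hk g A).mulVec y = 0) : y = 0 := by
  have hinj := Matrix.mulVec_injective_iff_isUnit.2 ((Matrix.isUnit_iff_isUnit_det _).2 hdet)
  apply hinj
  rw [hy, Matrix.mulVec_zero]

lemma exists_good (hrn : r ≤ n) (A : Matrix (Fin r) (Fin n) ℝ) :
    ∃ c : Fin (r + 1) × (Fin r → Fin n), good (c.1 : ℕ) c.1.is_le c.2 A := by
  classical
  set P : Fin (r + 1) × (Fin r → Fin n) → Prop := fun c =>
    Function.Injective c.2 ∧ IsUnit (gramM (c.1 : ℕ) c.1.is_le c.2 A).det with hP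
  have hne : (Finset.univ.filter P).Nonempty := by
    refine ⟨(0, Fin.castLE hrn), ?_⟩
    rw [Finset.mem_filter]
    refine ⟨Finset.mem_univ _, Fin.castLE_injective hrn, ?_⟩
    haveI : IsEmpty (Fin (((0 : Fin (r + 1))) : ℕ)) := by
      rw [Fin.val_zero]; infer_instance
    rw [Matrix.det_isEmpty]
    exact isUnit_one
  obtain ⟨c, hcmem, hmax⟩ :=
    Finset.exists_max_image (Finset.univ.filter P) (fun c => (c.1 : ℕ)) hne
  rw [Finset.mem_filter] at hcmem
  obtain ⟨-, hginj, hdet⟩ := hcmem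
  refine ⟨c, hginj, hdet, ?_⟩
  set k : ℕ := (c.1 : ℕ) with hkdef
  set hk : k ≤ r := c.1.is_le
  set g : Fin r → Fin n := c.2 with hgdef
  by_contra hne'
  have hexij : ∃ i0 j, (csub k hk g A * Cm k hk g A) i0 j ≠ A i0 j := by
    by_contra hco
    push_neg at hco
    exact hne' (Matrix.ext hco)
  obtain ⟨i0, j, hij⟩ := hexij
  set S : Matrix (Fin r) (Fin k) ℝ := csub k hk g A with hS
  set G : Matrix (Fin k) (Fin k) ℝ := gramM k hk g A with hG
  set a : Fin r → ℝ := fun i => A i j with ha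
  set w : Fin k → ℝ := fun b => Cm k hk g A b j with hw
  set v : Fin r → ℝ := a - S.mulVec w with hv
  have hvne : v ≠ 0 := by
    intro h0
    apply hij
    have h1 : a i0 - S.mulVec w i0 = 0 := by rw [← Pi.sub_apply, ← hv, h0]; rfl
    have h2 : (S * Cm k hk g A) i0 j = S.mulVec w i0 := rfl
    rw [h2]
    have := sub_eq_zero.1 h1
    rw [← this]
  -- orthogonality
  have hworth : w = G⁻¹.mulVec (fun b => ((S)ᵀ * A) b j) := rfl
  have hSa : Sᵀ.mulVec a = fun b => ((S)ᵀ * A) b j := rfl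
  have hOrth : Sᵀ.mulVec v = 0 := by
    rw [hv, Matrix.mulVec_sub, hSa, Matrix.mulVec_mulVec, hworth, Matrix.mulVec_mulVec]
    rw [show Sᵀ * S = G from rfl, Matrix.mul_nonsing_inv _ hdet, Matrix.one_mulVec, sub_self]
  -- k < r via linear independence
  have hklt : k < r := by
    have hli : LinearIndependent ℝ (Fin.snoc (fun b : Fin k => fun i => S i b) v :
        Fin (k + 1) → (Fin r → ℝ)) := by
      rw [Fintype.linearIndependent_iff]
      intro cvec hsum
      have hrepr : (∑ b : Fin (k + 1),
          cvec b • (Fin.snoc (fun b' : Fin k => fun i => S i b') v : Fin (k+1) → Fin r → ℝ) b)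
          = S.mulVec (fun b' => cvec b'.castSucc) + cvec (Fin.last k) • v := by
        rw [Fin.sum_univ_castSucc]
        simp only [Fin.snoc_castSucc, Fin.snoc_last]
        congr 1
        funext i
        rw [Finset.sum_apply]
        simp [Matrix.mulVec, dotProduct, mul_comm]
      rw [hrepr] at hsum
      have h1 : G.mulVec (fun b' => cvec b'.castSucc) = 0 := by
        have h2 := congrArg (Sᵀ.mulVec) hsum
        rw [Matrix.mulVec_add, Matrix.mulVec_smul, Matrix.mulVec_mulVec, hOrth, smul_zero,
          add_zero, Matrix.mulVec_zero] at h2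
        exact h2
      have h3 : (fun b' : Fin k => cvec b'.castSucc) = 0 := gram_inj hk g A hdet _ h1
      have h4 : cvec (Fin.last k) = 0 := by
        have h5 : S.mulVec (fun b' => cvec b'.castSucc) = 0 := by
          rw [h3, Matrix.mulVec_zero]
        rw [h5, zero_add] at hsum
        rcases smul_eq_zero.1 hsum with h | h
        · exact h
        · exact absurd h hvne
      intro b
      refine Fin.lastCases ?_ ?_ b
      · exact h4
      · intro b'
        exact congrFun h3 b'
    have hcard := hli.fintype_card_le_finrank
    rw [Fintype.card_fin, Module.finrank_fin_fun] at hcard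
    omega
  -- j is not among the first k columns
  have hjS : ∀ i1 : Fin r, (i1 : ℕ) < k → g i1 ≠ j := by
    intro i1 hi1 hgj
    apply hvne
    have hae : a = S.mulVec (Pi.single (⟨(i1 : ℕ), hi1⟩ : Fin k) (1 : ℝ)) := by
      rw [Matrix.mulVec_single]
      funext l
      rw [ha]
      show A l j = S l ⟨(i1 : ℕ), hi1⟩ * 1
      rw [mul_one, hS]
      show A l j = A l (g (Fin.castLE hk ⟨(i1 : ℕ), hi1⟩))
      rw [castLE_coe hk i1 hi1, hgj]
    have hwe : w = Pi.single (⟨(i1 : ℕ), hi1⟩ : Fin k) (1 : ℝ) := by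
      rw [hworth, ← hSa, hae, Matrix.mulVec_mulVec, Matrix.mulVec_mulVec,
        Matrix.mul_assoc, show Sᵀ * S = G from rfl, Matrix.nonsing_inv_mul _ hdet,
        Matrix.one_mulVec]
    rw [hv, hwe, ← hae, sub_self]
  -- construct the extended injection
  have hg'ex : ∃ g' : Fin r → Fin n, Function.Injective g' ∧
      (∀ i : Fin r, (i : ℕ) < k → g' i = g i) ∧ g' ⟨k, hklt⟩ = j := by
    by_cases hjr : ∃ i1, g i1 = j
    · obtain ⟨i1, hi1⟩ := hjr
      refine ⟨g ∘ Equiv.swap ⟨k, hklt⟩ i1, hginj.comp (Equiv.injective _), ?_, ?_⟩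
      · intro i hi
        have h1 : i ≠ ⟨k, hklt⟩ := by
          intro h; rw [h] at hi; exact absurd hi (lt_irrefl k)
        have h2 : i ≠ i1 := fun h => hjS i hi (h ▸ hi1)
        simp [Equiv.swap_apply_of_ne_of_ne h1 h2]
      · simp [Equiv.swap_apply_left, hi1]
    · push_neg at hjr
      refine ⟨Function.update g ⟨k, hklt⟩ j, ?_, ?_, Function.update_self _ _ _⟩
      · intro x y hxy
        rcases eq_or_ne x ⟨k, hklt⟩ with hx | hx <;> rcases eq_or_ne y ⟨k, hklt⟩ with hy | hy
        · rw [hx, hy]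
        · rw [hx, Function.update_self, Function.update_of_ne hy] at hxy
          exact absurd hxy.symm (hjr y)
        · rw [hy, Function.update_self, Function.update_of_ne hx] at hxy
          exact absurd hxy (hjr x)
        · rw [Function.update_of_ne hx, Function.update_of_ne hy] at hxy
          exact hginj hxy
      · intro i hi
        have h1 : i ≠ ⟨k, hklt⟩ := by
          intro h; rw [h] at hi; exact absurd hi (lt_irrefl k)
        rw [Function.update_of_ne h1]
  obtain ⟨g', hg'inj, hg'lt, hg'k⟩ := hg'ex
  have hk1 : k + 1 ≤ r := hklt
  -- the extended Gram matrix has trivial kernel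
  have hker : ∀ x : Fin (k + 1) → ℝ, (gramM (k + 1) hk1 g' A).mulVec x = 0 → x = 0 := by
    intro x hx
    set S' : Matrix (Fin r) (Fin (k + 1)) ℝ := csub (k + 1) hk1 g' A with hS'
    have hSx : S'.mulVec x = 0 := gram_ker S' x hx
    have hcols : ∀ (i : Fin r) (b : Fin k), S' i b.castSucc = S i b := by
      intro i b
      show A i (g' (Fin.castLE hk1 b.castSucc)) = A i (g (Fin.castLE hk b))
      have h1 : Fin.castLE hk1 b.castSucc = Fin.castLE hk b := rfl
      rw [h1, hg'lt _ (by simpa using b.isLt)]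
    have hlastcol : ∀ i : Fin r, S' i (Fin.last k) = a i := by
      intro i
      show A i (g' (Fin.castLE hk1 (Fin.last k))) = A i j
      have h1 : Fin.castLE hk1 (Fin.last k) = ⟨k, hklt⟩ := rfl
      rw [h1, hg'k]
    have hdecomp : S'.mulVec x
        = S.mulVec (fun b => x b.castSucc) + x (Fin.last k) • a := by
      funext i
      show (S' i) ⬝ᵥ x = _
      rw [dotProduct, Fin.sum_univ_castSucc]
      simp only [Pi.add_apply, Pi.smul_apply, smul_eq_mul]
      congr 1
      · rw [Finset.sum_congr rfl fun b _ => by rw [hcols i b]]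
        rfl
      · rw [hlastcol i, mul_comm]
    rw [hdecomp] at hSx
    have have_a : a = v + S.mulVec w := by rw [hv, sub_add_cancel]
    have h0' : S.mulVec ((fun b => x b.castSucc) + x (Fin.last k) • w)
        + x (Fin.last k) • v = 0 := by
      rw [Matrix.mulVec_add, Matrix.mulVec_smul]
      rw [have_a, smul_add] at hSx
      rw [← hSx]
      abel
    have h1 : G.mulVec ((fun b => x b.castSucc) + x (Fin.last k) • w) = 0 := by
      have h2 := congrArg (Sᵀ.mulVec) h0'
      rw [Matrix.mulVec_add, Matrix.mulVec_smul, Matrix.mulVec_mulVec, hOrth, smul_zero,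
        add_zero, Matrix.mulVec_zero] at h2
      exact h2
    have h3 : (fun b : Fin k => x b.castSucc) + x (Fin.last k) • w = 0 :=
      gram_inj hk g A hdet _ h1
    have h4 : x (Fin.last k) = 0 := by
      rw [h3, Matrix.mulVec_zero, zero_add] at h0'
      rcases smul_eq_zero.1 h0' with h | h
      · exact h
      · exact absurd h hvne
    have h5 : (fun b : Fin k => x b.castSucc) = 0 := by
      rw [h4, zero_smul, add_zero] at h3
      exact h3
    funext b
    refine Fin.lastCases ?_ ?_ b
    · exact h4
    · intro b'
      exact congrFun h5 b'
  -- the extended candidate contradicts maximality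
  have hP' : P (⟨k + 1, by omega⟩, g') := by
    refine ⟨hg'inj, Matrix.isUnit_iff_isUnit_det _ |>.1
      (Matrix.mulVec_injective_iff_isUnit.1 ?_)⟩
    intro x y hxy
    have h0 : (gramM (k + 1) hk1 g' A).mulVec (x - y) = 0 := by
      rw [Matrix.mulVec_sub]
      show (gramM ((⟨k + 1, by omega⟩ : Fin (r+1)) : ℕ)
        (Fin.is_le _) g' A).mulVec x - _ = 0
      rw [hxy, sub_self]
    have := hker _ h0
    exact sub_eq_zero.1 this
  have hle := hmax _ (Finset.mem_filter.2 ⟨Finset.mem_univ _, hP'⟩)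
  simp only [← hkdef] at hle
  omega


section Meas

variable (k : ℕ) (hk : k ≤ r) (g : Fin r → Fin n)

lemma cont_csub : Continuous fun A : Matrix (Fin r) (Fin n) ℝ => csub k hk g A :=
  continuous_pi fun i => continuous_pi fun a =>
    (continuous_apply (g (Fin.castLE hk a))).comp (continuous_apply i)

lemma cont_gram : Continuous fun A : Matrix (Fin r) (Fin n) ℝ => gramM k hk g A :=
  (cont_csub k hk g).matrix_transpose.matrix_mul (cont_csub k hk g)

lemma meas_Cm (a : Fin k) (j : Fin n) :
    Measurable fun A : Matrix (Fin r) (Fin n) ℝ => Cm k hk g A a j := by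
  have hrepr : ∀ A : Matrix (Fin r) (Fin n) ℝ, Cm k hk g A a j
      = ∑ b : Fin k, ((gramM k hk g A).det⁻¹ * (gramM k hk g A).adjugate a b)
          * ((csub k hk g A)ᵀ * A) b j := by
    intro A
    rw [Cm, Matrix.mul_apply]
    refine Finset.sum_congr rfl fun b _ => ?_
    rw [Matrix.inv_def, Matrix.smul_apply, smul_eq_mul, Ring.inverse_eq_inv]
  simp only [hrepr]
  apply Finset.measurable_sum
  intro b _
  have hdet : Measurable fun A : Matrix (Fin r) (Fin n) ℝ => (gramM k hk g A).det :=
    ((cont_gram k hk g).matrix_det).measurable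
  have hadj : Measurable fun A : Matrix (Fin r) (Fin n) ℝ => (gramM k hk g A).adjugate a b := by
    have h1 := ((cont_gram k hk g).matrix_adjugate).measurable
    exact (measurable_pi_apply b).comp ((measurable_pi_apply a).comp h1)
  have hX : Measurable fun A : Matrix (Fin r) (Fin n) ℝ => ((csub k hk g A)ᵀ * A) b j :=
    (((cont_csub k hk g).matrix_transpose.matrix_mul continuous_id).measurable.eval.eval)
  exact ((hdet.inv).mul hadj).mul hX

lemma meas_theta (i : Fin r) (j : Fin n) :
    Measurable fun A : Matrix (Fin r) (Fin n) ℝ => thetaC k hk g A i j := by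
  by_cases h : (i : ℕ) < k
  · simp only [thetaC, dif_pos h]
    exact meas_Cm k hk g ⟨i, h⟩ j
  · simp only [thetaC, dif_neg h]
    exact measurable_const

lemma meas_Mcm (i i' : Fin r) :
    Measurable fun A : Matrix (Fin r) (Fin n) ℝ => Mcm k hk g A i i' := by
  by_cases h : (i' : ℕ) < k
  · simp only [Mcm, if_pos h]
    exact (measurable_pi_apply (g i')).comp (measurable_pi_apply i)
  · simp only [Mcm, if_neg h]
    exact measurable_const

lemma meas_goodset : MeasurableSet {A : Matrix (Fin r) (Fin n) ℝ | good k hk g A} := by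
  by_cases hg : Function.Injective g
  · have hset : {A : Matrix (Fin r) (Fin n) ℝ | good k hk g A}
        = {A | (gramM k hk g A).det ≠ 0} ∩
          ⋂ (i : Fin r), ⋂ (j : Fin n),
            {A | (csub k hk g A * Cm k hk g A) i j = A i j} := by
      ext A
      simp only [good, Set.mem_setOf_eq, Set.mem_inter_iff, Set.mem_iInter, isUnit_iff_ne_zero]
      constructor
      · rintro ⟨-, h2, h3⟩
        exact ⟨h2, fun i j => by rw [h3]⟩
      · rintro ⟨h2, h3⟩
        exact ⟨hg, h2, Matrix.ext fun i j => h3 i j⟩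
    rw [hset]
    refine MeasurableSet.inter ?_ (MeasurableSet.iInter fun i => MeasurableSet.iInter fun j => ?_)
    · exact ((cont_gram k hk g).matrix_det).measurable (measurableSet_singleton 0).compl
    · refine measurableSet_eq_fun ?_ ?_
      · have : ∀ A : Matrix (Fin r) (Fin n) ℝ, (csub k hk g A * Cm k hk g A) i j
            = ∑ a : Fin k, csub k hk g A i a * Cm k hk g A a j :=
          fun A => Matrix.mul_apply
        simp only [this]
        apply Finset.measurable_sum
        intro a _
        exact ((cont_csub k hk g).measurable.eval.eval).mul (meas_Cm k hk g a j)
      · exact (measurable_pi_apply j).comp (measurable_pi_apply i)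
  · have hset : {A : Matrix (Fin r) (Fin n) ℝ | good k hk g A} = ∅ := by
      ext A
      simp [good, hg]
    rw [hset]
    exact MeasurableSet.empty

end Meas

open Classical in
def FF : List (Fin (r + 1) × (Fin r → Fin n)) → Matrix (Fin r) (Fin n) ℝ →
    Matrix (Fin r) (Fin r) ℝ × Matrix (Fin r) (Fin n) ℝ
  | [] => fun _ => (0, 0)
  | c :: L => fun A =>
      if good (c.1 : ℕ) c.1.is_le c.2 A then
        (Mcm (c.1 : ℕ) c.1.is_le c.2 A, thetaC (c.1 : ℕ) c.1.is_le c.2 A)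
      else FF L A

lemma meas_FF1 (L : List (Fin (r + 1) × (Fin r → Fin n))) (i i' : Fin r) :
    Measurable fun A : Matrix (Fin r) (Fin n) ℝ => (FF L A).1 i i' := by
  classical
  induction L with
  | nil => exact measurable_const
  | cons c L ih =>
    have hrepr : (fun A : Matrix (Fin r) (Fin n) ℝ => (FF (c :: L) A).1 i i')
        = fun A => if good (c.1 : ℕ) c.1.is_le c.2 A then Mcm (c.1 : ℕ) c.1.is_le c.2 A i i'
            else (FF L A).1 i i' := by
      funext A
      by_cases h : good (c.1 : ℕ) c.1.is_le c.2 A <;> simp [FF, h]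
    rw [hrepr]
    exact Measurable.ite (meas_goodset _ _ _) (meas_Mcm _ _ _ i i') ih

lemma meas_FF2 (L : List (Fin (r + 1) × (Fin r → Fin n))) (i : Fin r) (j : Fin n) :
    Measurable fun A : Matrix (Fin r) (Fin n) ℝ => (FF L A).2 i j := by
  classical
  induction L with
  | nil => exact measurable_const
  | cons c L ih =>
    have hrepr : (fun A : Matrix (Fin r) (Fin n) ℝ => (FF (c :: L) A).2 i j)
        = fun A => if good (c.1 : ℕ) c.1.is_le c.2 A then thetaC (c.1 : ℕ) c.1.is_le c.2 A i j
            else (FF L A).2 i j := by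
      funext A
      by_cases h : good (c.1 : ℕ) c.1.is_le c.2 A <;> simp [FF, h]
    rw [hrepr]
    exact Measurable.ite (meas_goodset _ _ _) (meas_theta _ _ _ i j) ih

lemma FF_spec (L : List (Fin (r + 1) × (Fin r → Fin n))) (A : Matrix (Fin r) (Fin n) ℝ)
    (hex : ∃ c ∈ L, good (c.1 : ℕ) c.1.is_le c.2 A) :
    ((FF L A).2).rank = r ∧ A = (FF L A).1 * (FF L A).2 := by
  classical
  induction L with
  | nil => simp at hex
  | cons c L ih =>
    by_cases h : good (c.1 : ℕ) c.1.is_le c.2 A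
    · simp only [FF, if_pos h]
      exact ⟨theta_rank _ _ _ h, (factor _ _ _ h).symm⟩
    · simp only [FF, if_neg h]
      apply ih
      obtain ⟨c', hc', hgood⟩ := hex
      rcases List.mem_cons.1 hc' with h1 | h1
      · exact absurd (h1 ▸ hgood) h
      · exact ⟨c', h1, hgood⟩

end Stmt7Aux


/-- Measurable factorization through a full-row-rank matrix: any measurable
`α : Ω → Matrix (Fin r) (Fin n) ℝ` with `r ≤ n` factors a.e. as `α = M * θ` with
measurable `M` (r × r) and measurable `θ` (r × n) of full rank `r`. -/
theorem stmt_7 {Ω : Type*} [MeasurableSpace Ω] (μ : Measure Ω) [IsProbabilityMeasure μ]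
    (r n : ℕ) (hrn : r ≤ n) (α : Ω → Matrix (Fin r) (Fin n) ℝ)
    (hα : ∀ i j, Measurable fun ω => α ω i j) :
    ∃ (M : Ω → Matrix (Fin r) (Fin r) ℝ) (θ : Ω → Matrix (Fin r) (Fin n) ℝ),
      (∀ i j, Measurable fun ω => M ω i j) ∧ (∀ i j, Measurable fun ω => θ ω i j) ∧
      ∀ᵐ ω ∂μ, (θ ω).rank = r ∧ α ω = M ω * θ ω := by
  classical
  have hαm : Measurable α :=
    measurable_pi_lambda _ fun i => measurable_pi_lambda _ fun j => hα i j
  set L := (Finset.univ : Finset (Fin (r + 1) × (Fin r → Fin n))).toList with hL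
  refine ⟨fun ω => (Stmt7Aux.FF L (α ω)).1, fun ω => (Stmt7Aux.FF L (α ω)).2, ?_, ?_, ?_⟩
  · intro i j
    exact (Stmt7Aux.meas_FF1 L i j).comp hαm
  · intro i j
    exact (Stmt7Aux.meas_FF2 L i j).comp hαm
  · refine ae_of_all μ fun ω => ?_
    obtain ⟨c, hc⟩ := Stmt7Aux.exists_good hrn (α ω)
    have hmem : c ∈ L := by simp [hL, Finset.mem_toList]
    exact Stmt7Aux.FF_spec L (α ω) ⟨c, hmem, hc⟩
end Stmt7Aux
end

section
/- Let (Ω, 𝓕) be a measurable space and let (μ_{ij})_{1 ≤ i,j ≤ n} be finite signed measures on (Ω, 𝓕) with μ_{ij} = μ_{ji} for all i, j. Assume that for every a ∈ ℝ^n the signed measure Σ_{i,j} a_i a_j μ_{ij} is a nonnegative measure. Let K = Σ_{i,j} |μ_{ij}|, where |μ_{ij}| denotes the total variation measure of μ_{ij}. Then each μ_{ij} is absolutely continuous with respect to K, and if C_{ij} denotes a Radon–Nikodym density of μ_{ij} with respect to K, then for K-a.e. ω the matrix (C_{ij}(ω))_{i,j} is symmetric and positive semidefinite. -/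
open MeasureTheory

private lemma ae_nonneg_aux {Ω : Type*} [MeasurableSpace Ω] (K : Measure Ω) [IsFiniteMeasure K]
    (f : Ω → ℝ) (F : ℕ → Set Ω) (hFm : ∀ N, MeasurableSet (F N))
    (hcov : ∀ ω, ∃ N, ω ∈ F N) (hint : ∀ N, IntegrableOn f (F N) K)
    (h : ∀ N, ∀ E : Set Ω, MeasurableSet E → E ⊆ F N → 0 ≤ ∫ ω in E, f ω ∂K) :
    0 ≤ᵐ[K] f := by
  have hN : ∀ N, ∀ᵐ ω ∂K, ω ∈ F N → 0 ≤ f ω := by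
    intro N
    have h1 : 0 ≤ᵐ[K.restrict (F N)] f := by
      refine ae_nonneg_of_forall_setIntegral_nonneg (hint N) fun s hs _ => ?_
      rw [Measure.restrict_restrict hs]
      exact h N _ (hs.inter (hFm N)) Set.inter_subset_right
    exact (ae_restrict_iff' (hFm N)).mp h1
  filter_upwards [ae_all_iff.mpr hN] with ω hω
  obtain ⟨N, hNω⟩ := hcov ω
  exact hω N hNω

private lemma vm_sum_apply {Ω ι : Type*} [MeasurableSpace Ω] (s : Finset ι)
    (v : ι → SignedMeasure Ω) (E : Set Ω) : (∑ i ∈ s, v i) E = ∑ i ∈ s, v i E := by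
  induction' s using Finset.cons_induction with i s hi ih
  · simp
  · rw [Finset.sum_cons, VectorMeasure.add_apply, ih, Finset.sum_cons]

private lemma vm_quad_apply {Ω : Type*} [MeasurableSpace Ω] {n : ℕ}
    (μ : Fin n → Fin n → SignedMeasure Ω) (a : Fin n → ℝ) (E : Set Ω) :
    (∑ i, ∑ j, (a i * a j) • μ i j) E = ∑ i, ∑ j, (a i * a j) * (μ i j E) := by
  rw [vm_sum_apply]
  refine Finset.sum_congr rfl fun i _ => ?_
  rw [vm_sum_apply]
  exact Finset.sum_congr rfl fun j _ => by rw [VectorMeasure.smul_apply, smul_eq_mul]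

/-- If `(μ i j)` is a symmetric family of finite signed measures such that
`∑ i j, a i * a j • μ i j ≥ 0` for every `a ∈ ℝⁿ`, and `K = ∑ i j, |μ i j|` is the sum of
the total variation measures, then each `μ i j ≪ K`, and any family of Radon–Nikodym
densities `C i j` of `μ i j` w.r.t. `K` is `K`-a.e. a symmetric positive semidefinite
matrix. -/
theorem stmt_11 {Ω : Type*} [MeasurableSpace Ω] (n : ℕ)
    (μ : Fin n → Fin n → SignedMeasure Ω)
    (hsymm : ∀ i j, μ i j = μ j i)
    (hpos : ∀ a : Fin n → ℝ, ∀ E : Set Ω, MeasurableSet E →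
      0 ≤ (∑ i, ∑ j, (a i * a j) • μ i j) E)
    (K : Measure Ω) (hK : K = ∑ i, ∑ j, (μ i j).totalVariation) :
    (∀ i j, ∀ E : Set Ω, MeasurableSet E → K E = 0 → μ i j E = 0) ∧
    (∀ C : Fin n → Fin n → Ω → ℝ, (∀ i j, Measurable (C i j)) →
      (∀ i j, ∀ E : Set Ω, MeasurableSet E → μ i j E = ∫ ω in E, C i j ω ∂K) →
      ∀ᵐ ω ∂K, (∀ i j, C i j ω = C j i ω) ∧
        ∀ a : Fin n → ℝ, 0 ≤ ∑ i, ∑ j, a i * a j * C i j ω) := by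
  haveI htv : ∀ i j : Fin n, IsFiniteMeasure (μ i j).totalVariation := fun i j => by
    unfold SignedMeasure.totalVariation; infer_instance
  haveI hKfin : IsFiniteMeasure K := by rw [hK]; infer_instance
  have habs : ∀ i j, ∀ E : Set Ω, MeasurableSet E → K E = 0 → μ i j E = 0 := by
    intro i j E _ hE0
    refine SignedMeasure.null_of_totalVariation_zero _ ?_
    rw [hK, Measure.finset_sum_apply] at hE0
    have h1 := (Finset.sum_eq_zero_iff.mp hE0) i (Finset.mem_univ i)
    rw [Measure.finset_sum_apply] at h1
    exact (Finset.sum_eq_zero_iff.mp h1) j (Finset.mem_univ j)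
  refine ⟨habs, ?_⟩
  intro C hCm hCint
  set F : ℕ → Set Ω := fun N => {ω | ∀ i j, |C i j ω| ≤ N} with hF
  have hFm : ∀ N, MeasurableSet (F N) := by
    intro N
    have : F N = ⋂ i, ⋂ j, {ω | |C i j ω| ≤ N} := by ext ω; simp [hF]
    rw [this]
    exact MeasurableSet.iInter fun i => MeasurableSet.iInter fun j =>
      measurableSet_le (hCm i j).abs measurable_const
  have hcov : ∀ ω, ∃ N, ω ∈ F N := by
    intro ω
    refine ⟨⌈∑ i, ∑ j, |C i j ω|⌉₊, fun i j => ?_⟩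
    calc |C i j ω| ≤ ∑ j', |C i j' ω| :=
          Finset.single_le_sum (f := fun j' => |C i j' ω|) (fun k _ => abs_nonneg _) (Finset.mem_univ j)
      _ ≤ ∑ i', ∑ j', |C i' j' ω| :=
          Finset.single_le_sum (f := fun i' => ∑ j', |C i' j' ω|)
            (fun k _ => Finset.sum_nonneg fun _ _ => abs_nonneg _) (Finset.mem_univ i)
      _ ≤ _ := Nat.le_ceil _
  have hintC : ∀ (N : ℕ) (i j : Fin n), IntegrableOn (C i j) (F N) K := by
    intro N i j
    refine Integrable.mono' (integrable_const (N : ℝ)) (hCm i j).aestronglyMeasurable ?_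
    refine (ae_restrict_iff' (hFm N)).mpr (ae_of_all _ fun ω hω => ?_)
    rw [Real.norm_eq_abs]; exact hω i j
  have hsymC : ∀ᵐ ω ∂K, ∀ i j, C i j ω = C j i ω := by
    refine ae_all_iff.mpr fun i => ae_all_iff.mpr fun j => ?_
    have key : ∀ (i j : Fin n), 0 ≤ᵐ[K] fun ω => C i j ω - C j i ω := by
      intro i j
      refine ae_nonneg_aux K _ F hFm hcov (fun N => (hintC N i j).sub (hintC N j i)) ?_
      intro N E hE hsub
      rw [integral_sub ((hintC N i j).mono_set hsub) ((hintC N j i).mono_set hsub),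
        ← hCint i j E hE, ← hCint j i E hE, hsymm i j]
      simp
    filter_upwards [key i j, key j i] with ω h1 h2
    simp only [Pi.zero_apply] at h1 h2
    linarith
  have hquad : ∀ q : Fin n → ℚ, ∀ᵐ ω ∂K,
      0 ≤ ∑ i, ∑ j, ((q i : ℝ) * (q j : ℝ)) * C i j ω := by
    intro q
    have := ae_nonneg_aux K (fun ω => ∑ i, ∑ j, ((q i : ℝ) * (q j : ℝ)) * C i j ω) F hFm hcov
      (fun N => integrable_finset_sum _ fun i _ => integrable_finset_sum _ fun j _ =>
        (hintC N i j).const_mul _) ?_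
    · filter_upwards [this] with ω hω using hω
    intro N E hE hsub
    have e : ∫ ω in E, (∑ i, ∑ j, ((q i : ℝ) * (q j : ℝ)) * C i j ω) ∂K
        = ∑ i, ∑ j, ((q i : ℝ) * (q j : ℝ)) * (μ i j E) := by
      rw [integral_finset_sum _ fun i _ => integrable_finset_sum _ fun j _ =>
        ((hintC N i j).mono_set hsub).const_mul _]
      refine Finset.sum_congr rfl fun i _ => ?_
      rw [integral_finset_sum _ fun j _ => ((hintC N i j).mono_set hsub).const_mul _]
      refine Finset.sum_congr rfl fun j _ => ?_
      rw [integral_const_mul, ← hCint i j E hE]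
    rw [e]
    have hp := hpos (fun i => (q i : ℝ)) E hE
    rwa [vm_quad_apply] at hp
  filter_upwards [hsymC, ae_all_iff.mpr hquad] with ω h1 h2
  refine ⟨h1, fun a => ?_⟩
  have hScl : IsClosed {a : Fin n → ℝ | 0 ≤ ∑ i, ∑ j, a i * a j * C i j ω} := by
    refine isClosed_le continuous_const ?_
    exact continuous_finset_sum _ fun i _ => continuous_finset_sum _ fun j _ =>
      ((continuous_apply i).mul (continuous_apply j)).mul continuous_const
  have hsubS : (Set.univ.pi fun _ : Fin n => Set.range ((↑) : ℚ → ℝ)) ⊆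
      {a : Fin n → ℝ | 0 ≤ ∑ i, ∑ j, a i * a j * C i j ω} := by
    intro a ha
    choose q hq using fun i => ha i (Set.mem_univ i)
    have haq : a = fun i => (q i : ℝ) := funext fun i => (hq i).symm
    rw [Set.mem_setOf_eq, haq]
    exact h2 q
  have hdense : Dense (Set.univ.pi fun _ : Fin n => Set.range ((↑) : ℚ → ℝ)) :=
    dense_pi Set.univ fun i _ => Rat.denseRange_cast
  exact (hScl.closure_subset_iff.mpr hsubS) (hdense a)
end
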